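/- arXiv:2601.12216 — 4 statements merged into one kernel-verified Lean document; each statement's English description precedes it below -/
import Mathlib

section
/- The weight function W is twice continuously differentiable on (u_-, u_m] and satisfies, for all s ∈ (u_-, u_m]: (15/8)u_m^2 ≤ W(s) < (15/2)u_m^2, -(5/2)u_m ≤ W'(s) ≤ 0, and 0 ≤ W''(s) ≤ 15/2. -/
noncomputable section

/-- The weight function `W` of the paper (extended by the same formulas to all of `ℝ`). -/
def W (um : ℝ) (s : ℝ) : ℝ :=
  if s < 0 then (5 / 2) * um * (um - s)
  else if s < um / 2 then (5 / (2 * um ^ 2)) * (um - s) * (4 * s ^ 3 + um ^ 3)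
  else (15 / 8) * um ^ 2

def DW (um : ℝ) (s : ℝ) : ℝ :=
  if s < 0 then -(5 / 2) * um
  else if s < um / 2 then (5 / (2 * um ^ 2)) * (12 * um * s ^ 2 - 16 * s ^ 3 - um ^ 3)
  else 0

def DDW (um : ℝ) (s : ℝ) : ℝ := (60 / um ^ 2) * max (s * (um - 2 * s)) 0

-- derivative of the middle polynomial piece
lemma hasDerivAt_M (um s : ℝ) :
    HasDerivAt (fun x : ℝ => (5 / (2 * um ^ 2)) * (um - x) * (4 * x ^ 3 + um ^ 3))
      ((5 / (2 * um ^ 2)) * (12 * um * s ^ 2 - 16 * s ^ 3 - um ^ 3)) s := by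
  have h1 : HasDerivAt (fun x : ℝ => (5 / (2 * um ^ 2)) * (um - x)) (-(5 / (2 * um ^ 2))) s := by
    simpa using ((hasDerivAt_id s).const_sub um).const_mul (5 / (2 * um ^ 2))
  have h2 : HasDerivAt (fun x : ℝ => 4 * x ^ 3 + um ^ 3) (12 * s ^ 2) s := by
    have := ((hasDerivAt_pow 3 s).const_mul 4).add_const (um ^ 3)
    refine this.congr_deriv ?_
    push_cast; ring
  have := h1.mul h2
  refine this.congr_deriv ?_
  ring

lemma hasDerivAt_M' (um s : ℝ) :
    HasDerivAt (fun x : ℝ => (5 / (2 * um ^ 2)) * (12 * um * x ^ 2 - 16 * x ^ 3 - um ^ 3))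
      ((5 / (2 * um ^ 2)) * (24 * um * s - 48 * s ^ 2)) s := by
  have h2 : HasDerivAt (fun x : ℝ => 12 * um * x ^ 2 - 16 * x ^ 3 - um ^ 3)
      (24 * um * s - 48 * s ^ 2) s := by
    have a1 := (hasDerivAt_pow 2 s).const_mul (12 * um)
    have a2 := (hasDerivAt_pow 3 s).const_mul 16
    have := (a1.sub a2).sub_const (um ^ 3)
    refine this.congr_deriv ?_
    push_cast; ring
  simpa using h2.const_mul (5 / (2 * um ^ 2))

lemma W_eq_left (um : ℝ) (hum : 0 < um) {s : ℝ} (hs : s ≤ 0) :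
    W um s = (5 / 2) * um * (um - s) := by
  rcases lt_or_eq_of_le hs with h | h
  · simp [W, h]
  · subst h
    have h1 : ¬ ((0:ℝ) < 0) := lt_irrefl 0
    have h2 : (0:ℝ) < um / 2 := by linarith
    simp only [W, if_neg (lt_irrefl 0), if_pos h2]
    field_simp
    rw [if_neg h1]
    field_simp
    ring

lemma W_eq_mid (um : ℝ) (hum : 0 < um) {s : ℝ} (h0 : 0 ≤ s) (h1 : s ≤ um / 2) :
    W um s = (5 / (2 * um ^ 2)) * (um - s) * (4 * s ^ 3 + um ^ 3) := by
  rcases lt_or_eq_of_le h1 with h | h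
  · simp [W, not_lt.2 h0, h]
  · subst h
    simp only [W, if_neg (not_lt.2 h0), if_neg (lt_irrefl _)]
    field_simp
    ring

lemma W_eq_right (um : ℝ) {s : ℝ} (h1 : um / 2 ≤ s) (hum : 0 < um) :
    W um s = (15 / 8) * um ^ 2 := by
  have : ¬ s < 0 := by push_neg; linarith
  simp [W, this, not_lt.2 h1]

lemma hasDerivAt_W (um : ℝ) (hum : 0 < um) (s : ℝ) : HasDerivAt (W um) (DW um s) s := by
  have humhalf : (0:ℝ) < um / 2 := by linarith
  rcases lt_trichotomy s 0 with hs | hs | hs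
  · -- s < 0
    have hL : HasDerivAt (fun x : ℝ => (5 / 2) * um * (um - x)) (-(5 / 2) * um) s := by
      simpa using ((hasDerivAt_id s).const_sub um).const_mul ((5 / 2) * um)
    rw [DW, if_pos hs]
    refine hL.congr_of_eventuallyEq ?_
    filter_upwards [Iio_mem_nhds hs] with x hx
    exact W_eq_left um hum (le_of_lt hx)
  · -- s = 0
    subst hs
    have hval : DW um 0 = -(5 / 2) * um := by
      rw [DW, if_neg (lt_irrefl 0), if_pos humhalf]
      field_simp; ring
    have hleft : HasDerivWithinAt (W um) (DW um 0) (Set.Iic 0) 0 := by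
      have hL : HasDerivAt (fun x : ℝ => (5 / 2) * um * (um - x)) (DW um 0) 0 := by
        rw [hval]; simpa using ((hasDerivAt_id (0:ℝ)).const_sub um).const_mul ((5 / 2) * um)
      exact hL.hasDerivWithinAt.congr (fun y hy => W_eq_left um hum hy)
        (W_eq_left um hum le_rfl)
    have hright : HasDerivWithinAt (W um) (DW um 0) (Set.Icc 0 (um / 2)) 0 := by
      have hM : HasDerivAt (fun x : ℝ => (5 / (2 * um ^ 2)) * (um - x) * (4 * x ^ 3 + um ^ 3))
          (DW um 0) 0 := by
        have := hasDerivAt_M um 0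
        convert this using 1
        rw [hval]; field_simp; ring
      exact hM.hasDerivWithinAt.congr (fun y hy => W_eq_mid um hum hy.1 hy.2)
        (W_eq_mid um hum le_rfl (le_of_lt humhalf))
    have hu : Set.Iic (0:ℝ) ∪ Set.Icc 0 (um / 2) = Set.Iic (um / 2) := by
      ext x
      simp only [Set.mem_union, Set.mem_Iic, Set.mem_Icc]
      constructor
      · rintro (h | ⟨h1, h2⟩) <;> linarith
      · intro h
        rcases le_total x 0 with h' | h'
        · exact Or.inl h'
        · exact Or.inr ⟨h', h⟩
    have := hleft.union hright
    rw [hu] at this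
    exact this.hasDerivAt (Iic_mem_nhds humhalf)
  · rcases lt_trichotomy s (um / 2) with hs2 | hs2 | hs2
    · -- 0 < s < um/2
      rw [DW, if_neg (not_lt.2 hs.le), if_pos hs2]
      refine (hasDerivAt_M um s).congr_of_eventuallyEq ?_
      filter_upwards [Ioo_mem_nhds hs hs2] with x hx
      exact W_eq_mid um hum hx.1.le hx.2.le
    · -- s = um/2
      subst hs2
      have hval : DW um (um / 2) = 0 := by
        rw [DW, if_neg (not_lt.2 humhalf.le), if_neg (lt_irrefl _)]
      have hleft : HasDerivWithinAt (W um) (DW um (um / 2)) (Set.Icc 0 (um / 2)) (um / 2) := by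
        have hM : HasDerivAt (fun x : ℝ => (5 / (2 * um ^ 2)) * (um - x) * (4 * x ^ 3 + um ^ 3))
            (DW um (um / 2)) (um / 2) := by
          have := hasDerivAt_M um (um / 2)
          convert this using 1
          rw [hval]; field_simp; ring
        exact hM.hasDerivWithinAt.congr (fun y hy => W_eq_mid um hum hy.1 hy.2)
          (W_eq_mid um hum humhalf.le le_rfl)
      have hright : HasDerivWithinAt (W um) (DW um (um / 2)) (Set.Ici (um / 2)) (um / 2) := by
        rw [hval]
        exact (hasDerivWithinAt_const _ _ _).congr
          (fun y hy => W_eq_right um hy hum) (W_eq_right um le_rfl hum)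
      have hu : Set.Icc (0:ℝ) (um / 2) ∪ Set.Ici (um / 2) = Set.Ici 0 := by
        ext x
        simp only [Set.mem_union, Set.mem_Icc, Set.mem_Ici]
        constructor
        · rintro (⟨h1, h2⟩ | h) <;> linarith
        · intro h
          rcases le_total x (um / 2) with h' | h'
          · exact Or.inl ⟨h, h'⟩
          · exact Or.inr h'
      have := hleft.union hright
      rw [hu] at this
      exact this.hasDerivAt (Ici_mem_nhds humhalf)
    · -- s > um/2
      have : DW um s = 0 := by
        rw [DW, if_neg (by push_neg; linarith), if_neg (not_lt.2 hs2.le)]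
      rw [this]
      refine (hasDerivAt_const s ((15 / 8) * um ^ 2)).congr_of_eventuallyEq ?_
      filter_upwards [Ioi_mem_nhds hs2] with x hx
      exact W_eq_right um (le_of_lt hx) hum

lemma DW_eq_left (um : ℝ) (hum : 0 < um) {s : ℝ} (hs : s ≤ 0) :
    DW um s = -(5 / 2) * um := by
  rcases lt_or_eq_of_le hs with h | h
  · simp [DW, h]
  · subst h
    rw [DW, if_neg (lt_irrefl 0), if_pos (by linarith : (0:ℝ) < um / 2)]
    field_simp; ring

lemma DW_eq_mid (um : ℝ) (hum : 0 < um) {s : ℝ} (h0 : 0 ≤ s) (h1 : s ≤ um / 2) :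
    DW um s = (5 / (2 * um ^ 2)) * (12 * um * s ^ 2 - 16 * s ^ 3 - um ^ 3) := by
  rcases lt_or_eq_of_le h1 with h | h
  · simp [DW, not_lt.2 h0, h]
  · subst h
    rw [DW, if_neg (not_lt.2 h0), if_neg (lt_irrefl _)]
    field_simp; ring

lemma DW_eq_right (um : ℝ) {s : ℝ} (h1 : um / 2 ≤ s) (hum : 0 < um) :
    DW um s = 0 := by
  have : ¬ s < 0 := by push_neg; linarith
  simp [DW, this, not_lt.2 h1]

lemma DDW_left (um : ℝ) (hum : 0 < um) {s : ℝ} (hs : s ≤ 0) : DDW um s = 0 := by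
  have : s * (um - 2 * s) ≤ 0 :=
    mul_nonpos_iff.2 (Or.inr ⟨hs, by linarith⟩)
  rw [DDW, max_eq_right this, mul_zero]

lemma DDW_mid (um : ℝ) (hum : 0 < um) {s : ℝ} (h0 : 0 ≤ s) (h1 : s ≤ um / 2) :
    DDW um s = (5 / (2 * um ^ 2)) * (24 * um * s - 48 * s ^ 2) := by
  have hp : 0 ≤ s * (um - 2 * s) := mul_nonneg h0 (by linarith)
  rw [DDW, max_eq_left hp]
  field_simp; ring

lemma DDW_right (um : ℝ) (hum : 0 < um) {s : ℝ} (h1 : um / 2 ≤ s) : DDW um s = 0 := by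
  have : s * (um - 2 * s) ≤ 0 :=
    mul_nonpos_iff.2 (Or.inl ⟨by linarith, by linarith⟩)
  rw [DDW, max_eq_right this, mul_zero]

lemma hasDerivAt_DW (um : ℝ) (hum : 0 < um) (s : ℝ) : HasDerivAt (DW um) (DDW um s) s := by
  have humhalf : (0:ℝ) < um / 2 := by linarith
  rcases lt_trichotomy s 0 with hs | hs | hs
  · rw [DDW_left um hum hs.le]
    refine (hasDerivAt_const s (-(5 / 2) * um)).congr_of_eventuallyEq ?_
    filter_upwards [Iio_mem_nhds hs] with x hx
    exact DW_eq_left um hum (le_of_lt hx)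
  · subst hs
    have hval : DDW um 0 = 0 := DDW_left um hum le_rfl
    rw [hval]
    have hleft : HasDerivWithinAt (DW um) 0 (Set.Iic 0) 0 :=
      (hasDerivWithinAt_const _ _ _).congr (fun y hy => DW_eq_left um hum hy)
        (DW_eq_left um hum le_rfl)
    have hright : HasDerivWithinAt (DW um) 0 (Set.Icc 0 (um / 2)) 0 := by
      have hM : HasDerivAt
          (fun x : ℝ => (5 / (2 * um ^ 2)) * (12 * um * x ^ 2 - 16 * x ^ 3 - um ^ 3)) 0 0 := by
        have := hasDerivAt_M' um 0
        convert this using 1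
        ring
      exact hM.hasDerivWithinAt.congr (fun y hy => DW_eq_mid um hum hy.1 hy.2)
        (DW_eq_mid um hum le_rfl humhalf.le)
    have hu : Set.Iic (0:ℝ) ∪ Set.Icc 0 (um / 2) = Set.Iic (um / 2) := by
      ext x
      simp only [Set.mem_union, Set.mem_Iic, Set.mem_Icc]
      constructor
      · rintro (h | ⟨h1, h2⟩) <;> linarith
      · intro h
        rcases le_total x 0 with h' | h'
        · exact Or.inl h'
        · exact Or.inr ⟨h', h⟩
    have := hleft.union hright
    rw [hu] at this
    exact this.hasDerivAt (Iic_mem_nhds humhalf)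
  · rcases lt_trichotomy s (um / 2) with hs2 | hs2 | hs2
    · rw [DDW_mid um hum hs.le hs2.le]
      refine (hasDerivAt_M' um s).congr_of_eventuallyEq ?_
      filter_upwards [Ioo_mem_nhds hs hs2] with x hx
      exact DW_eq_mid um hum hx.1.le hx.2.le
    · subst hs2
      rw [DDW_right um hum le_rfl]
      have hleft : HasDerivWithinAt (DW um) 0 (Set.Icc 0 (um / 2)) (um / 2) := by
        have hM : HasDerivAt
            (fun x : ℝ => (5 / (2 * um ^ 2)) * (12 * um * x ^ 2 - 16 * x ^ 3 - um ^ 3))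
            0 (um / 2) := by
          have := hasDerivAt_M' um (um / 2)
          convert this using 1
          field_simp; ring
        exact hM.hasDerivWithinAt.congr (fun y hy => DW_eq_mid um hum hy.1 hy.2)
          (DW_eq_mid um hum humhalf.le le_rfl)
      have hright : HasDerivWithinAt (DW um) 0 (Set.Ici (um / 2)) (um / 2) :=
        (hasDerivWithinAt_const _ _ _).congr (fun y hy => DW_eq_right um hy hum)
          (DW_eq_right um le_rfl hum)
      have hu : Set.Icc (0:ℝ) (um / 2) ∪ Set.Ici (um / 2) = Set.Ici 0 := by
        ext x
        simp only [Set.mem_union, Set.mem_Icc, Set.mem_Ici]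
        constructor
        · rintro (⟨h1, h2⟩ | h) <;> linarith
        · intro h
          rcases le_total x (um / 2) with h' | h'
          · exact Or.inl ⟨h, h'⟩
          · exact Or.inr h'
      have := hleft.union hright
      rw [hu] at this
      exact this.hasDerivAt (Ici_mem_nhds humhalf)
    · rw [DDW_right um hum hs2.le]
      refine (hasDerivAt_const s 0).congr_of_eventuallyEq ?_
      filter_upwards [Ioi_mem_nhds hs2] with x hx
      exact DW_eq_right um (le_of_lt hx) hum

lemma deriv_W (um : ℝ) (hum : 0 < um) : deriv (W um) = DW um :=
  funext fun s => (hasDerivAt_W um hum s).deriv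

lemma deriv_DW (um : ℝ) (hum : 0 < um) : deriv (DW um) = DDW um :=
  funext fun s => (hasDerivAt_DW um hum s).deriv

lemma continuous_DDW (um : ℝ) : Continuous (DDW um) := by
  unfold DDW
  fun_prop

lemma contDiff_W (um : ℝ) (hum : 0 < um) : ContDiff ℝ 2 (W um) := by
  rw [show (2 : WithTop ℕ∞) = 1 + 1 from rfl, contDiff_succ_iff_deriv]
  refine ⟨fun s => (hasDerivAt_W um hum s).differentiableAt, by simp, ?_⟩
  rw [deriv_W um hum, contDiff_one_iff_deriv]
  exact ⟨fun s => (hasDerivAt_DW um hum s).differentiableAt,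
    (deriv_DW um hum) ▸ continuous_DDW um⟩

lemma W_bounds (um : ℝ) (hum : 0 < um) {s : ℝ} (h1 : -2 * um < s) (h2 : s ≤ um) :
    (15 / 8) * um ^ 2 ≤ W um s ∧ W um s < (15 / 2) * um ^ 2 := by
  rcases le_or_gt 0 s with h0 | h0
  · rcases le_or_gt s (um / 2) with hh | hh
    · rw [W_eq_mid um hum h0 hh]
      have h5 : (0:ℝ) ≤ 5 / (2 * um ^ 2) := by positivity
      constructor
      · have key : (3 / 4) * um ^ 4 ≤ (um - s) * (4 * s ^ 3 + um ^ 3) := by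
          nlinarith [mul_nonneg (sq_nonneg (um - 2 * s))
            (mul_nonneg (show (0:ℝ) ≤ um - 2 * s by linarith)
              (show (0:ℝ) ≤ um + 2 * s by linarith))]
        calc (15 / 8) * um ^ 2 = (5 / (2 * um ^ 2)) * ((3 / 4) * um ^ 4) := by
              field_simp; ring
          _ ≤ (5 / (2 * um ^ 2)) * ((um - s) * (4 * s ^ 3 + um ^ 3)) :=
              mul_le_mul_of_nonneg_left key h5
          _ = (5 / (2 * um ^ 2)) * (um - s) * (4 * s ^ 3 + um ^ 3) := by ring
      · have key : (um - s) * (4 * s ^ 3 + um ^ 3) ≤ (3 / 2) * um ^ 4 := by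
          nlinarith [mul_nonneg (pow_nonneg h0 3) (show (0:ℝ) ≤ um - 2 * s by linarith),
            mul_nonneg (mul_nonneg h0 h0) (show (0:ℝ) ≤ um - 2 * s by linarith),
            sq_nonneg (um - 2 * s), mul_nonneg h0 hum.le]
        have hlt : (5 / (2 * um ^ 2)) * ((3 / 2) * um ^ 4) < (15 / 2) * um ^ 2 := by
          rw [show (5 / (2 * um ^ 2)) * ((3 / 2) * um ^ 4) = (15 / 4) * um ^ 2 by
            field_simp; ring]
          nlinarith [pow_pos hum 2]
        calc (5 / (2 * um ^ 2)) * (um - s) * (4 * s ^ 3 + um ^ 3)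
            = (5 / (2 * um ^ 2)) * ((um - s) * (4 * s ^ 3 + um ^ 3)) := by ring
          _ ≤ (5 / (2 * um ^ 2)) * ((3 / 2) * um ^ 4) := mul_le_mul_of_nonneg_left key h5
          _ < (15 / 2) * um ^ 2 := hlt
    · rw [W_eq_right um hh.le hum]
      exact ⟨le_rfl, by nlinarith [pow_pos hum 2]⟩
  · rw [W_eq_left um hum h0.le]
    constructor
    · nlinarith [mul_pos hum hum, mul_nonneg hum.le (show (0:ℝ) ≤ -s by linarith)]
    · nlinarith [mul_pos hum (show (0:ℝ) < 2 * um + s by linarith)]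

lemma DW_bounds (um : ℝ) (hum : 0 < um) (s : ℝ) :
    -(5 / 2) * um ≤ DW um s ∧ DW um s ≤ 0 := by
  rcases le_or_gt 0 s with h0 | h0
  · rcases le_or_gt s (um / 2) with hh | hh
    · rw [DW_eq_mid um hum h0 hh]
      have h5 : (0:ℝ) ≤ 5 / (2 * um ^ 2) := by positivity
      constructor
      · have key : -(um ^ 3) ≤ 12 * um * s ^ 2 - 16 * s ^ 3 - um ^ 3 := by
          nlinarith [mul_nonneg (mul_nonneg h0 h0) (show (0:ℝ) ≤ 3 * um - 4 * s by linarith)]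
        calc -(5 / 2) * um = (5 / (2 * um ^ 2)) * (-(um ^ 3)) := by field_simp
          _ ≤ _ := mul_le_mul_of_nonneg_left key h5
      · have key : 12 * um * s ^ 2 - 16 * s ^ 3 - um ^ 3 ≤ 0 := by
          nlinarith [mul_nonneg (sq_nonneg (um - 2 * s))
            (show (0:ℝ) ≤ 4 * s + um by linarith)]
        have := mul_le_mul_of_nonneg_left key h5
        simpa using this
    · rw [DW_eq_right um hh.le hum]
      exact ⟨by linarith, le_rfl⟩
  · rw [DW_eq_left um hum h0.le]
    exact ⟨le_rfl, by linarith⟩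

lemma DDW_bounds (um : ℝ) (hum : 0 < um) (s : ℝ) :
    0 ≤ DDW um s ∧ DDW um s ≤ 15 / 2 := by
  constructor
  · exact mul_nonneg (by positivity) (le_max_right _ _)
  · have hm : max (s * (um - 2 * s)) 0 ≤ um ^ 2 / 8 :=
      max_le (by nlinarith [sq_nonneg (um - 4 * s)]) (by positivity)
    calc DDW um s ≤ (60 / um ^ 2) * (um ^ 2 / 8) :=
          mul_le_mul_of_nonneg_left hm (by positivity)
      _ = 15 / 2 := by field_simp; ring

/-- the weight function is `C²` on `(u₋, u_m]` and satisfies the stated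
pointwise bounds for itself and its first two derivatives. -/
theorem stmt_3 (um : ℝ) (hum : 0 < um) :
    ContDiffOn ℝ 2 (W um) (Set.Ioc (-2 * um) um) ∧
    ∀ s ∈ Set.Ioc (-2 * um) um,
      ((15 / 8) * um ^ 2 ≤ W um s ∧ W um s < (15 / 2) * um ^ 2) ∧
      (-(5 / 2) * um ≤ deriv (W um) s ∧ deriv (W um) s ≤ 0) ∧
      (0 ≤ deriv (deriv (W um)) s ∧ deriv (deriv (W um)) s ≤ 15 / 2) := by
  constructor
  · exact (contDiff_W um hum).contDiffOn
  · intro s hs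
    rw [deriv_W um hum, deriv_DW um hum]
    exact ⟨W_bounds um hum hs.1 hs.2, DW_bounds um hum s, DDW_bounds um hum s⟩
end
end

section
/- For all t ≥ 0 and x ∈ ℝ one has u_- < u^R(t,x) < u_+ and ∂_x u^R(t,x) > 0. Moreover there exists C > 0 such that for all t ≥ 0: |u^R(t,x) - u_+| ≤ C δ_R e^{-2|x - λ_+ t|} for all x ≥ λ_+ t, and |u^R(t,x) - u_-| ≤ C δ_R e^{-2|x - λ_- t|} for all x ≤ λ_- t. -/
open Filter MeasureTheory

noncomputable section

open Set Filter

lemma tanh_formula (x : ℝ) : Real.tanh x = 1 - 2 / (Real.exp (2*x) + 1) := by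
  have h1 : Real.exp x ≠ 0 := Real.exp_ne_zero x
  have h2 : Real.exp (2*x) + 1 > 0 := by positivity
  have h3 : Real.exp x + Real.exp (-x) > 0 := by positivity
  rw [Real.tanh_eq_sinh_div_cosh, Real.sinh_eq, Real.cosh_eq]
  have hx2 : Real.exp (2*x) = Real.exp x * Real.exp x := by
    rw [two_mul, Real.exp_add]
  have hneg : Real.exp (-x) = (Real.exp x)⁻¹ := Real.exp_neg x
  rw [hx2, hneg] at *
  rw [div_div_div_cancel_right₀]
  · field_simp
    ring
  · norm_num

lemma tanh_hasDerivAt (x : ℝ) :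
    HasDerivAt Real.tanh (4 * Real.exp (2*x) / (Real.exp (2*x) + 1)^2) x := by
  have h2 : ∀ y : ℝ, Real.exp (2*y) + 1 ≠ 0 := fun y => by positivity
  have hu : HasDerivAt (fun y : ℝ => Real.exp (2*y) + 1) (Real.exp (2*x) * 2) x := by
    have : HasDerivAt (fun y : ℝ => 2*y) 2 x := by
      simpa using (hasDerivAt_id x).const_mul (2:ℝ)
    exact ((Real.hasDerivAt_exp (2*x)).comp x this).add_const 1
  have hd : HasDerivAt (fun y : ℝ => 1 - 2 / (Real.exp (2*y) + 1))
      (4 * Real.exp (2*x) / (Real.exp (2*x) + 1)^2) x := by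
    have : HasDerivAt (fun y : ℝ => 1 - 2 / (Real.exp (2*y) + 1))
        (-((0 * (Real.exp (2*x) + 1) - 2 * (Real.exp (2*x) * 2)) / (Real.exp (2*x) + 1)^2)) x :=
      ((hasDerivAt_const x (2:ℝ)).div hu (h2 x)).const_sub 1
    convert this using 1
    ring
  have : Real.tanh = fun y : ℝ => 1 - 2 / (Real.exp (2*y) + 1) := funext tanh_formula
  rw [this]
  exact hd

open Set

lemma char_lemma (W : ℝ × ℝ → ℝ) (hW : ContDiff ℝ (⊤:ℕ∞) W)
    (hpde : ∀ t x : ℝ, 0 ≤ t →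
      fderiv ℝ W (t,x) (1,0) = -(W (t,x) * fderiv ℝ W (t,x) (0,1)))
    (x0 c t : ℝ) (ht : 0 ≤ t) (h0 : W (0, x0) = c) :
    W (t, x0 + t * c) = c := by
  have hWd : Differentiable ℝ W := hW.differentiable (by simp)
  set γ : ℝ → ℝ × ℝ := fun s => (s, x0 + s * c) with hγdef
  have hγ : ∀ s : ℝ, HasDerivAt γ (1, c) s := by
    intro s
    refine (hasDerivAt_id s).prodMk ?_
    simpa using ((hasDerivAt_id s).mul_const c).const_add x0
  have hγc : Continuous γ := by
    apply Continuous.prodMk continuous_id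
    exact continuous_const.add (continuous_id.mul continuous_const)
  set g : ℝ → ℝ := fun s => W (γ s) - c with hgdef
  have hg' : ∀ s : ℝ, HasDerivAt g (fderiv ℝ W (γ s) (1, c)) s := fun s =>
    ((hWd (γ s)).hasFDerivAt.comp_hasDerivAt s (hγ s)).sub_const c
  set P : ℝ × ℝ → ℝ := fun p => fderiv ℝ W p (0, 1) with hPdef
  have hPc : Continuous P :=
    (hW.continuous_fderiv (by simp)).clm_apply continuous_const
  -- the derivative identity on [0, t]
  have hval : ∀ s : ℝ, 0 ≤ s → fderiv ℝ W (γ s) (1, c) = -(g s) * P (γ s) := by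
    intro s hs
    have hsplit : ((1 : ℝ), c) = ((1:ℝ),(0:ℝ)) + c • ((0:ℝ),(1:ℝ)) := by
      simp [Prod.ext_iff]
    rw [hsplit, (fderiv ℝ W (γ s)).map_add, (fderiv ℝ W (γ s)).map_smul]
    have := hpde s (x0 + s * c) hs
    simp only [hγdef] at *
    rw [this]
    simp only [hgdef, hPdef, smul_eq_mul]
    ring
  -- bound via compactness
  obtain ⟨K, hK⟩ := (isCompact_Icc.image hγc).exists_bound_of_continuousOn
    hPc.continuousOn (f := P)
  have key : ∀ s ∈ Icc (0:ℝ) t, ‖g s‖ ≤ gronwallBound 0 K 0 (s - 0) := by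
    refine norm_le_gronwallBound_of_norm_deriv_right_le
      (f := g) (f' := fun s => -(g s) * P (γ s)) ?_ ?_ ?_ ?_
    · exact (((hW.continuous).comp hγc).sub continuous_const).continuousOn
    · intro s hs
      have := hg' s
      rw [hval s hs.1] at this
      exact this.hasDerivWithinAt
    · simp [hgdef, hγdef, h0]
    · intro s hs
      have hmem : γ s ∈ γ '' Icc 0 t := mem_image_of_mem γ ⟨hs.1, hs.2.le⟩
      have := hK (γ s) hmem
      calc ‖-(g s) * P (γ s)‖ = ‖P (γ s)‖ * ‖g s‖ := by
            rw [norm_mul, norm_neg, mul_comm]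
        _ ≤ K * ‖g s‖ + 0 := by
            rw [add_zero]
            exact mul_le_mul_of_nonneg_right this (norm_nonneg _)
  have := key t ⟨ht, le_refl t⟩
  rw [gronwallBound_ε0_δ0] at this
  have h0' : g t = 0 := by
    have h1 : |g t| ≤ 0 := by simpa using this
    exact abs_eq_zero.mp (le_antisymm h1 (abs_nonneg _))
  have : W (t, x0 + t * c) - c = 0 := h0'
  linarith

open Set Filter

set_option maxHeartbeats 1600000 in
/-- positivity/monotonicity of the approximate rarefaction wave and
its exponential convergence to the end states outside the fan region. -/
theorem stmt_4 (f : ℝ → ℝ) (uminus uplus δR : ℝ)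
    (hf : ContDiff ℝ (⊤ : ℕ∞) f) (hlt : uminus < uplus)
    (hconv : ∀ u ∈ Set.Icc uminus uplus, 0 < deriv (deriv f) u)
    (hδR : δR = uplus - uminus)
    (wR uR : ℝ → ℝ → ℝ)
    (hwsmooth : ContDiff ℝ (⊤ : ℕ∞) (fun p : ℝ × ℝ => wR p.1 p.2))
    (hwpde : ∀ t x : ℝ, 0 ≤ t →
      deriv (fun s => wR s x) t + wR t x * deriv (fun y => wR t y) x = 0)
    (hw0 : ∀ x : ℝ, wR 0 x =
      (deriv f uplus + deriv f uminus) / 2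
        + ((deriv f uplus - deriv f uminus) / 2) * Real.tanh x)
    (huR : ∀ t x : ℝ, 0 ≤ t →
      uR t x ∈ Set.Icc uminus uplus ∧ deriv f (uR t x) = wR t x) :
    (∀ t x : ℝ, 0 ≤ t →
      (uminus < uR t x ∧ uR t x < uplus) ∧ 0 < deriv (fun y => uR t y) x) ∧
    ∃ C > (0:ℝ), ∀ t x : ℝ, 0 ≤ t →
      (deriv f uplus * t ≤ x →
        |uR t x - uplus| ≤ C * δR * Real.exp (-2 * |x - deriv f uplus * t|)) ∧
      (x ≤ deriv f uminus * t →
        |uR t x - uminus| ≤ C * δR * Real.exp (-2 * |x - deriv f uminus * t|)) := by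
  -- ===== basic facts about f =====
  have hL1 : ContDiff ℝ (⊤:ℕ∞) (deriv f) := (contDiff_infty_iff_deriv.mp hf).2
  have hLdiff : Differentiable ℝ (deriv f) := (contDiff_infty_iff_deriv.mp hL1).1
  have hf2c : Continuous (deriv (deriv f)) := (contDiff_infty_iff_deriv.mp hL1).2.continuous
  have hmono : StrictMonoOn (deriv f) (Icc uminus uplus) :=
    strictMonoOn_of_deriv_pos (convex_Icc _ _) hL1.continuous.continuousOn
      (fun u hu => hconv u (interior_subset hu))
  have hlam : deriv f uminus < deriv f uplus :=
    hmono (left_mem_Icc.2 hlt.le) (right_mem_Icc.2 hlt.le) hlt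
  obtain ⟨umin, huminK, hminOn⟩ := isCompact_Icc.exists_isMinOn (nonempty_Icc.2 hlt.le)
    hf2c.continuousOn
  obtain ⟨umax, humaxK, hmaxOn⟩ := isCompact_Icc.exists_isMaxOn (nonempty_Icc.2 hlt.le)
    hf2c.continuousOn
  set m := deriv (deriv f) umin with hmdef
  set M := deriv (deriv f) umax with hMdef
  have hm : 0 < m := hconv _ huminK
  have hM : 0 < M := hconv _ humaxK
  have hmle : ∀ u ∈ Icc uminus uplus, m ≤ deriv (deriv f) u := fun u hu => hminOn hu
  have hMge : ∀ u ∈ Icc uminus uplus, deriv (deriv f) u ≤ M := fun u hu => hmaxOn hu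
  have hMVT : ∀ a b, a ∈ Icc uminus uplus → b ∈ Icc uminus uplus → a ≤ b →
      m * (b - a) ≤ deriv f b - deriv f a ∧ deriv f b - deriv f a ≤ M * (b - a) := by
    intro a b ha hb hab
    rcases eq_or_lt_of_le hab with rfl | hab'
    · simp
    · obtain ⟨c, hc, hceq⟩ := exists_hasDerivAt_eq_slope (deriv f) (deriv (deriv f)) hab'
        hL1.continuous.continuousOn (fun u _ => (hLdiff u).hasDerivAt)
      have hcK : c ∈ Icc uminus uplus := ⟨le_trans ha.1 hc.1.le, le_trans hc.2.le hb.2⟩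
      have hne : b - a ≠ 0 := by linarith
      have heq : deriv (deriv f) c * (b - a) = deriv f b - deriv f a := (eq_div_iff hne).mp hceq
      constructor <;> nlinarith [hmle c hcK, hMge c hcK]
  -- ===== the initial profile w0 =====
  set m0 : ℝ := (deriv f uplus + deriv f uminus) / 2 with hm0def
  set d' : ℝ := (deriv f uplus - deriv f uminus) / 2 with hd'def
  have hd' : 0 < d' := by rw [hd'def]; linarith
  set w0 : ℝ → ℝ := fun y => m0 + d' * Real.tanh y with hw0def
  have htanh_mem : ∀ y : ℝ, Real.tanh y ∈ Ioo (-1 : ℝ) 1 := by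
    intro y
    rw [tanh_formula]
    have h1 : 0 < Real.exp (2*y) + 1 := by positivity
    have h2 : 2 / (Real.exp (2*y) + 1) < 2 := by
      rw [div_lt_iff₀ h1]; nlinarith [Real.exp_pos (2*y)]
    have h3 : 0 < 2 / (Real.exp (2*y) + 1) := by positivity
    constructor <;> [linarith; linarith]
  have hw0b : ∀ y : ℝ, deriv f uminus < w0 y ∧ w0 y < deriv f uplus := by
    intro y
    obtain ⟨h1, h2⟩ := htanh_mem y
    have e1 : m0 - d' = deriv f uminus := by rw [hm0def, hd'def]; ring
    have e2 : m0 + d' = deriv f uplus := by rw [hm0def, hd'def]; ring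
    constructor
    · show deriv f uminus < m0 + d' * Real.tanh y
      nlinarith
    · show m0 + d' * Real.tanh y < deriv f uplus
      nlinarith
  have hw0d : ∀ y : ℝ, HasDerivAt w0
      (d' * (4 * Real.exp (2*y) / (Real.exp (2*y) + 1)^2)) y := by
    intro y
    exact ((tanh_hasDerivAt y).const_mul d').const_add m0
  have hw0dpos : ∀ y : ℝ, 0 < d' * (4 * Real.exp (2*y) / (Real.exp (2*y) + 1)^2) := by
    intro y; positivity
  have hw0mono : StrictMono w0 :=
    strictMono_of_deriv_pos (fun y => by rw [(hw0d y).deriv]; exact hw0dpos y)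
  have hw0cont : Continuous w0 := by
    have htanhc : Continuous Real.tanh := by
      have : Real.tanh = fun y : ℝ => 1 - 2 / (Real.exp (2*y) + 1) := funext tanh_formula
      rw [this]
      exact continuous_const.sub (continuous_const.div
        ((Real.continuous_exp.comp (continuous_const.mul continuous_id)).add continuous_const)
        (fun y => by positivity))
    exact continuous_const.add (continuous_const.mul htanhc)
  -- ===== characteristics =====
  set W : ℝ × ℝ → ℝ := fun p => wR p.1 p.2 with hWdef
  have hWd : Differentiable ℝ W := hwsmooth.differentiable (by simp)
  have hpt : ∀ t x : ℝ, HasDerivAt (fun s => wR s x) (fderiv ℝ W (t,x) (1,0)) t := fun t x =>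
    by have h := (hWd (t,x)).hasFDerivAt.comp_hasDerivAt t ((hasDerivAt_id' t).prodMk (hasDerivAt_const t x)); exact h
  have hpx : ∀ t x : ℝ, HasDerivAt (fun y => wR t y) (fderiv ℝ W (t,x) (0,1)) x := fun t x =>
    (hWd (t,x)).hasFDerivAt.comp_hasDerivAt x ((hasDerivAt_const x t).prodMk (hasDerivAt_id x))
  have hpde' : ∀ t x : ℝ, 0 ≤ t →
      fderiv ℝ W (t,x) (1,0) = -(W (t,x) * fderiv ℝ W (t,x) (0,1)) := by
    intro t x ht
    have h1 := (hpt t x).deriv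
    have h2 := (hpx t x).deriv
    have h3 := hwpde t x ht
    rw [h1, h2] at h3
    have : W (t,x) = wR t x := rfl
    rw [this]; linarith
  have hchar : ∀ t : ℝ, 0 ≤ t → ∀ y : ℝ, wR t (y + t * w0 y) = w0 y := by
    intro t ht y
    exact char_lemma W hwsmooth hpde' y (w0 y) t ht (by show wR 0 y = w0 y; rw [hw0 y])
  have hexist : ∀ t : ℝ, 0 ≤ t → ∀ x : ℝ, ∃ y, x = y + t * w0 y ∧ wR t x = w0 y := by
    intro t ht x
    have hφc : Continuous (fun y => y + t * w0 y) :=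
      continuous_id.add (continuous_const.mul hw0cont)
    have htop : Tendsto (fun y => y + t * w0 y) atTop atTop := by
      apply tendsto_atTop_mono (f := fun y => y + t * deriv f uminus)
      · intro y
        have := (hw0b y).1
        nlinarith
      · exact tendsto_atTop_add_const_right _ _ tendsto_id
    have hbot : Tendsto (fun y => y + t * w0 y) atBot atBot := by
      apply tendsto_atBot_mono (f := fun y => y + t * deriv f uplus)
      · intro y
        have := (hw0b y).2
        nlinarith
      · exact tendsto_atBot_add_const_right _ _ tendsto_id
    obtain ⟨y, hy⟩ := (hφc.surjective htop hbot) x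
    exact ⟨y, hy.symm, by rw [← hy]; exact hchar t ht y⟩
  have hwb : ∀ t : ℝ, 0 ≤ t → ∀ x : ℝ,
      deriv f uminus < wR t x ∧ wR t x < deriv f uplus := by
    intro t ht x
    obtain ⟨y, _, hxy⟩ := hexist t ht x
    rw [hxy]; exact hw0b y
  -- strict bounds on uR
  have huRb : ∀ t x : ℝ, 0 ≤ t → uminus < uR t x ∧ uR t x < uplus := by
    intro t x ht
    obtain ⟨hmem, heq⟩ := huR t x ht
    obtain ⟨hw1, hw2⟩ := hwb t ht x
    constructor
    · rcases eq_or_lt_of_le hmem.1 with h | h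
      · rw [← h] at heq; rw [heq] at hw1; linarith
      · exact h
    · rcases eq_or_lt_of_le hmem.2 with h | h
      · rw [h] at heq; rw [heq] at hw2; linarith
      · exact h
  -- positivity of ∂ₓ wR
  have hwx : ∀ t : ℝ, 0 ≤ t → ∀ x : ℝ, 0 < fderiv ℝ W (t,x) (0,1) := by
    intro t ht x
    obtain ⟨y, hy, hxy⟩ := hexist t ht x
    have hφd : HasDerivAt (fun z => z + t * w0 z)
        (1 + t * (d' * (4 * Real.exp (2*y) / (Real.exp (2*y) + 1)^2))) y :=
      (hasDerivAt_id y).add ((hw0d y).const_mul t)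
    have hcomp : HasDerivAt (fun z => wR t (z + t * w0 z))
        (fderiv ℝ W (t, y + t * w0 y) (0,1) *
          (1 + t * (d' * (4 * Real.exp (2*y) / (Real.exp (2*y) + 1)^2)))) y :=
      (hpx t (y + t * w0 y)).comp y hφd
    have hfun : (fun z => wR t (z + t * w0 z)) = w0 := funext (hchar t ht)
    rw [hfun] at hcomp
    have huniq := hcomp.unique (hw0d y)
    have hden : 0 < 1 + t * (d' * (4 * Real.exp (2*y) / (Real.exp (2*y) + 1)^2)) := by
      have := hw0dpos y; nlinarith
    have h1 := hw0dpos y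
    rw [hy]
    nlinarith [mul_pos hden h1]
  -- ===== inverse of deriv f on [uminus, uplus] =====
  set g : ℝ → ℝ := Function.invFunOn (deriv f) (Icc uminus uplus) with hgdef
  have himg : deriv f '' Icc uminus uplus = Icc (deriv f uminus) (deriv f uplus) := by
    apply Subset.antisymm
    · rintro _ ⟨u, hu, rfl⟩
      exact ⟨hmono.monotoneOn (left_mem_Icc.2 hlt.le) hu hu.1,
             hmono.monotoneOn hu (right_mem_Icc.2 hlt.le) hu.2⟩
    · exact intermediate_value_Icc hlt.le hL1.continuous.continuousOn
  have hgL : ∀ u ∈ Icc uminus uplus, g (deriv f u) = u :=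
    fun u hu => hmono.injOn.leftInvOn_invFunOn hu
  have hgmem : ∀ y ∈ Icc (deriv f uminus) (deriv f uplus),
      g y ∈ Icc uminus uplus ∧ deriv f (g y) = y := by
    intro y hy
    rw [← himg] at hy
    obtain ⟨u, hu, huy⟩ := hy
    rw [← huy]
    exact ⟨Function.invFunOn_mem ⟨u, hu, rfl⟩, Function.invFunOn_eq ⟨u, hu, rfl⟩⟩
  have hgmono : MonotoneOn g (Ioo (deriv f uminus) (deriv f uplus)) := by
    intro y1 h1 y2 h2 h12
    by_contra hcon
    push_neg at hcon
    have hs := hmono (hgmem y2 (Ioo_subset_Icc_self h2)).1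
      (hgmem y1 (Ioo_subset_Icc_self h1)).1 hcon
    rw [(hgmem y1 (Ioo_subset_Icc_self h1)).2, (hgmem y2 (Ioo_subset_Icc_self h2)).2] at hs
    linarith
  have hgimg : Ioo uminus uplus ⊆ g '' Ioo (deriv f uminus) (deriv f uplus) := by
    intro u hu
    refine ⟨deriv f u, ⟨?_, ?_⟩, hgL u (Ioo_subset_Icc_self hu)⟩
    · exact hmono (left_mem_Icc.2 hlt.le) (Ioo_subset_Icc_self hu) hu.1
    · exact hmono (Ioo_subset_Icc_self hu) (right_mem_Icc.2 hlt.le) hu.2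
  -- ===== derivative of uR =====
  have huRderiv : ∀ t x : ℝ, 0 ≤ t → 0 < deriv (fun y => uR t y) x := by
    intro t x ht
    obtain ⟨hmem, heq⟩ := huR t x ht
    obtain ⟨hu1, hu2⟩ := huRb t x ht
    have hwtx : wR t x ∈ Ioo (deriv f uminus) (deriv f uplus) :=
      ⟨(hwb t ht x).1, (hwb t ht x).2⟩
    have hguR : g (wR t x) = uR t x := by rw [← heq]; exact hgL _ hmem
    have hgc : ContinuousAt g (wR t x) := by
      apply continuousAt_of_monotoneOn_of_image_mem_nhds hgmono (isOpen_Ioo.mem_nhds hwtx)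
      apply mem_of_superset (isOpen_Ioo.mem_nhds ?_) hgimg
      rw [hguR]; exact ⟨hu1, hu2⟩
    have hfd : HasDerivAt (deriv f) (deriv (deriv f) (uR t x)) (g (wR t x)) := by
      rw [hguR]; exact (hLdiff _).hasDerivAt
    have hgd : HasDerivAt g (deriv (deriv f) (uR t x))⁻¹ (wR t x) := by
      refine HasDerivAt.of_local_left_inverse hgc hfd (ne_of_gt (hconv _ hmem)) ?_
      filter_upwards [isOpen_Ioo.mem_nhds hwtx] with y hy
      exact (hgmem y (Ioo_subset_Icc_self hy)).2
    have hcompd : HasDerivAt (fun y => g (wR t y))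
        ((deriv (deriv f) (uR t x))⁻¹ * fderiv ℝ W (t,x) (0,1)) x := hgd.comp x (hpx t x)
    have hfunx : (fun y => uR t y) = fun y => g (wR t y) := by
      funext y
      obtain ⟨hmy, hey⟩ := huR t y ht
      rw [← hey, hgL _ hmy]
    rw [hfunx, hcompd.deriv]
    have hpos1 := hwx t ht x
    have hpos2 := hconv _ hmem
    positivity
  -- ===== conclusion =====
  have hδRpos : 0 < δR := by rw [hδR]; linarith
  have h2dM : 2 * d' ≤ M * δR := by
    have := (hMVT uminus uplus (left_mem_Icc.2 hlt.le) (right_mem_Icc.2 hlt.le) hlt.le).2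
    have h2d' : 2 * d' = deriv f uplus - deriv f uminus := by rw [hd'def]; ring
    rw [hδR, h2d']; linarith
  refine ⟨fun t x ht => ⟨huRb t x ht, huRderiv t x ht⟩, M/m, by positivity, ?_⟩
  intro t x ht
  obtain ⟨hmem, heq⟩ := huR t x ht
  obtain ⟨y, hy, hxy⟩ := hexist t ht x
  have hE : 0 < Real.exp (2*y) := Real.exp_pos _
  constructor
  · -- plus side
    intro hx
    have hA : 0 ≤ uplus - uR t x := by linarith [hmem.2]
    have habs : |uR t x - uplus| = uplus - uR t x := by
      rw [abs_sub_comm]; exact abs_of_nonneg hA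
    have hmvt := (hMVT (uR t x) uplus hmem (right_mem_Icc.2 hlt.le) hmem.2).1
    rw [heq] at hmvt
    have hwexp : deriv f uplus - wR t x ≤ 2 * d' * Real.exp (-(2*y)) := by
      rw [hxy]
      show deriv f uplus - (m0 + d' * Real.tanh y) ≤ _
      rw [tanh_formula, Real.exp_neg]
      have e2 : m0 + d' = deriv f uplus := by rw [hm0def, hd'def]; ring
      rw [← e2]
      have hkey : (2:ℝ)/(Real.exp (2*y)+1) ≤ 2 * (Real.exp (2*y))⁻¹ := by
        rw [← div_eq_mul_inv]
        exact div_le_div_of_nonneg_left (by norm_num) hE (by linarith)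
      have hgoal : m0 + d' - (m0 + d' * (1 - 2/(Real.exp (2*y)+1)))
          = d' * (2/(Real.exp (2*y)+1)) := by ring
      rw [hgoal]
      calc d' * (2/(Real.exp (2*y)+1)) ≤ d' * (2 * (Real.exp (2*y))⁻¹) :=
            mul_le_mul_of_nonneg_left hkey hd'.le
        _ = 2 * d' * (Real.exp (2*y))⁻¹ := by ring
    have hyx : |x - deriv f uplus * t| ≤ y := by
      rw [abs_of_nonneg (by linarith : (0:ℝ) ≤ x - deriv f uplus * t)]
      have hb := (hw0b y).2
      rw [hy]
      nlinarith
    have hexp : Real.exp (-(2*y)) ≤ Real.exp (-2 * |x - deriv f uplus * t|) :=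
      Real.exp_le_exp.mpr (by nlinarith [abs_nonneg (x - deriv f uplus * t)])
    rw [habs]
    have hchain : m * (uplus - uR t x) ≤ M * δR * Real.exp (-2*|x - deriv f uplus * t|) := by
      calc m * (uplus - uR t x) ≤ deriv f uplus - wR t x := hmvt
        _ ≤ 2*d' * Real.exp (-(2*y)) := hwexp
        _ ≤ M * δR * Real.exp (-2*|x - deriv f uplus * t|) :=
            mul_le_mul h2dM hexp (Real.exp_pos _).le (by positivity)
    rw [div_mul_eq_mul_div, div_mul_eq_mul_div, le_div_iff₀ hm]
    linarith
  · -- minus side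
    intro hx
    have hB : 0 ≤ uR t x - uminus := by linarith [hmem.1]
    have habs : |uR t x - uminus| = uR t x - uminus := abs_of_nonneg hB
    have hmvt := (hMVT uminus (uR t x) (left_mem_Icc.2 hlt.le) hmem hmem.1).1
    rw [heq] at hmvt
    have hwexp : wR t x - deriv f uminus ≤ 2 * d' * Real.exp (2*y) := by
      rw [hxy]
      show (m0 + d' * Real.tanh y) - deriv f uminus ≤ _
      rw [tanh_formula]
      have e1 : m0 - d' = deriv f uminus := by rw [hm0def, hd'def]; ring
      rw [← e1]
      have hkey : (2:ℝ) - 2/(Real.exp (2*y)+1) ≤ 2 * Real.exp (2*y) := by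
        have h1 : (2:ℝ) - 2/(Real.exp (2*y)+1) = 2*Real.exp (2*y)/(Real.exp (2*y)+1) := by
          field_simp
          ring
        rw [h1]
        exact div_le_self (by positivity) (by linarith)
      have hgoal : m0 + d' * (1 - 2/(Real.exp (2*y)+1)) - (m0 - d')
          = d' * (2 - 2/(Real.exp (2*y)+1)) := by ring
      rw [hgoal]
      calc d' * (2 - 2/(Real.exp (2*y)+1)) ≤ d' * (2 * Real.exp (2*y)) :=
            mul_le_mul_of_nonneg_left hkey hd'.le
        _ = 2 * d' * Real.exp (2*y) := by ring
    have hyx : |x - deriv f uminus * t| ≤ -y := by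
      rw [abs_of_nonpos (by linarith : x - deriv f uminus * t ≤ 0)]
      have hb := (hw0b y).1
      rw [hy]
      nlinarith
    have hexp : Real.exp (2*y) ≤ Real.exp (-2 * |x - deriv f uminus * t|) :=
      Real.exp_le_exp.mpr (by nlinarith [abs_nonneg (x - deriv f uminus * t)])
    rw [habs]
    have hchain : m * (uR t x - uminus) ≤ M * δR * Real.exp (-2*|x - deriv f uminus * t|) := by
      calc m * (uR t x - uminus) ≤ wR t x - deriv f uminus := hmvt
        _ ≤ 2*d' * Real.exp (2*y) := hwexp
        _ ≤ M * δR * Real.exp (-2*|x - deriv f uminus * t|) :=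
            mul_le_mul h2dM hexp (Real.exp_pos _).le (by positivity)
    rw [div_mul_eq_mul_div, div_mul_eq_mul_div, le_div_iff₀ hm]
    linarith
end
end

section
/- For every ε ∈ (0,1) there exists a positive constant C_ε such that for all t ≥ 1: |u^R(t,x) - u_+| ≤ C_ε δ_R^{2ε/(2+ε)} t^{-1+ε} e^{-ε|x - λ_+ t|} for all x ≥ λ_+ t; |u^R(t,x) - u_-| ≤ C_ε δ_R^{2ε/(2+ε)} t^{-1+ε} e^{-ε|x - λ_- t|} for all x ≤ λ_- t; and |u^R(t,x) - u^r(x/t)| ≤ C_ε δ_R^{ε} t^{-1+ε} for all x with λ_- t ≤ x ≤ λ_+ t. -/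
open Filter MeasureTheory

noncomputable section

lemma one_sub_tanh' (ξ : ℝ) : 1 - Real.tanh ξ = 2 / (Real.exp (2*ξ) + 1) := by
  have he : Real.exp (ξ*2) = Real.exp ξ ^ 2 := by
    rw [← Real.exp_nsmul]; norm_num [mul_comm]
  rw [Real.tanh_eq_sinh_div_cosh, Real.sinh_eq, Real.cosh_eq]
  have hne : Real.exp ξ + Real.exp (-ξ) ≠ 0 := by positivity
  have hne2 : Real.exp (2*ξ) + 1 ≠ 0 := by positivity
  have hx : Real.exp (-ξ) = (Real.exp ξ)⁻¹ := Real.exp_neg ξ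
  field_simp [hx]
  ring_nf
  nlinarith [Real.exp_pos ξ, he, show Real.exp (-ξ) * Real.exp (ξ * 2) = Real.exp ξ by rw [← Real.exp_add]; ring_nf]

lemma one_add_tanh' (ξ : ℝ) : 1 + Real.tanh ξ = 2 / (Real.exp (2*(-ξ)) + 1) := by
  have := one_sub_tanh' (-ξ)
  rw [Real.tanh_neg] at this
  linarith

lemma tanh_mem' (ξ : ℝ) : -1 < Real.tanh ξ ∧ Real.tanh ξ < 1 := by
  have h1 := one_sub_tanh' ξ
  have h2 := one_add_tanh' ξ
  have p1 : (0:ℝ) < 2 / (Real.exp (2*ξ) + 1) := by positivity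
  have p2 : (0:ℝ) < 2 / (Real.exp (2*(-ξ)) + 1) := by positivity
  constructor <;> linarith

lemma mid_bound' {ε b t ξ : ℝ} (hε : 0 < ε) (hb : 0 < b) (ht : 1 ≤ t)
    (h : |ξ| * (Real.exp (2*|ξ|) + 1) ≤ 2*b*t) :
    |ξ| ≤ (1 + (2*b)^ε/(2*ε)) * t^ε := by
  set z := |ξ| with hz
  have hz0 : 0 ≤ z := abs_nonneg ξ
  have htε : (1:ℝ) ≤ t^ε := Real.one_le_rpow ht (le_of_lt hε)
  have htε0 : (0:ℝ) ≤ t^ε := by linarith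
  have hc0 : (0:ℝ) ≤ (2*b)^ε/(2*ε) := by positivity
  rcases le_or_gt z 1 with h1 | h1
  · nlinarith
  · have h2 : Real.exp (2*z) ≤ 2*b*t := by
      nlinarith [Real.exp_pos (2*z)]
    have h3 : 2*z ≤ Real.log (2*b*t) := by
      rw [← Real.log_exp (2*z)]
      exact Real.log_le_log (Real.exp_pos _) h2
    have h4 : Real.log (2*b*t) ≤ (2*b*t)^ε/ε :=
      Real.log_le_rpow_div (by positivity) hε
    have h5 : (2*b*t)^ε = (2*b)^ε * t^ε :=
      Real.mul_rpow (by positivity) (by linarith)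
    have h6 : 2*z ≤ (2*b)^ε * t^ε / ε := by
      rw [← h5]; linarith
    have h7 : z ≤ ((2*b)^ε/(2*ε)) * t^ε := by
      have e1 : ((2*b)^ε/(2*ε)) * t^ε = ((2*b)^ε * t^ε)/(2*ε) := by ring
      rw [e1, le_div_iff₀ (by linarith : (0:ℝ) < 2*ε)]
      rw [le_div_iff₀ hε] at h6
      nlinarith
    nlinarith

lemma core_decay' {ε b t y θ ζ : ℝ} (hε : 0 < ε) (hε1 : ε < 1) (hb : 0 < b)
    (ht : 1 ≤ t) (hy : 0 ≤ y)
    (hθ : θ = 2*b/(Real.exp (2*ζ)+1)) (hζ : ζ = y + t*θ) :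
    θ ≤ (2*b*(ε*b) ^ (-((2-ε)/(2+ε)))) * t ^ (-1+ε) * Real.exp (-ε*y) := by
  have ht0 : (0:ℝ) < t := lt_of_lt_of_le one_pos ht
  have hE : (0:ℝ) < Real.exp (2*ζ) + 1 := by positivity
  have hθ0 : 0 < θ := by rw [hθ]; positivity
  have hζ0 : 0 ≤ ζ := by nlinarith
  have hζy : y ≤ ζ := by nlinarith
  have hζtθ : t*θ ≤ ζ := by nlinarith
  have hmul : θ * (Real.exp (2*ζ)+1) = 2*b := by
    rw [hθ]; field_simp
  have h1 : 2*b*t ≤ ζ*(Real.exp (2*ζ)+1) := by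
    have h := mul_le_mul_of_nonneg_right hζtθ (le_of_lt hE)
    nlinarith
  have h2 : ζ ≤ Real.exp (ε*ζ)/ε := by
    have := Real.add_one_le_exp (ε*ζ)
    rw [le_div_iff₀ hε]
    nlinarith
  have h3 : Real.exp (2*ζ)+1 ≤ 2*Real.exp (2*ζ) := by
    have : (1:ℝ) ≤ Real.exp (2*ζ) := Real.one_le_exp (by linarith)
    linarith
  have h4 : ε*b*t ≤ Real.exp ((2+ε)*ζ) := by
    have hee : Real.exp (ε*ζ) * Real.exp (2*ζ) = Real.exp ((2+ε)*ζ) := by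
      rw [← Real.exp_add]; ring_nf
    have hcc : 2*b*t ≤ (Real.exp (ε*ζ)/ε) * (2*Real.exp (2*ζ)) := by
      calc 2*b*t ≤ ζ*(Real.exp (2*ζ)+1) := h1
      _ ≤ (Real.exp (ε*ζ)/ε) * (2*Real.exp (2*ζ)) := by
          apply mul_le_mul h2 h3 (le_of_lt hE)
          positivity
    rw [div_mul_eq_mul_div, le_div_iff₀ hε] at hcc
    nlinarith
  set q : ℝ := (2-ε)/(2+ε) with hq
  have h2ε : (0:ℝ) < 2+ε := by linarith
  have hq0 : 0 ≤ q := by apply div_nonneg <;> linarith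
  have hεbt : (0:ℝ) < ε*b*t := by positivity
  have h5 : (ε*b*t) ^ q ≤ Real.exp ((2-ε)*ζ) := by
    have h := Real.rpow_le_rpow (le_of_lt hεbt) h4 hq0
    rwa [← Real.exp_mul, show (2+ε)*ζ*q = (2-ε)*ζ by
      rw [hq]; field_simp] at h
  have h6 : Real.exp (-((2-ε)*ζ)) ≤ (ε*b*t) ^ (-q) := by
    rw [Real.exp_neg, Real.rpow_neg (le_of_lt hεbt)]
    exact inv_anti₀ (by positivity) h5
  have h7 : θ ≤ 2*b * Real.exp (-(ε*ζ)) * Real.exp (-((2-ε)*ζ)) := by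
    have : Real.exp (-(ε*ζ)) * Real.exp (-((2-ε)*ζ)) = Real.exp (-(2*ζ)) := by
      rw [← Real.exp_add]; ring_nf
    rw [mul_assoc, this, hθ, Real.exp_neg, div_le_iff₀ hE]
    have hinv : Real.exp (2*ζ) * (Real.exp (2*ζ))⁻¹ = 1 :=
      mul_inv_cancel₀ (ne_of_gt (Real.exp_pos _))
    nlinarith [inv_pos.2 (Real.exp_pos (2*ζ))]
  have h8 : Real.exp (-(ε*ζ)) ≤ Real.exp (-ε*y) := by
    apply Real.exp_le_exp.2; nlinarith
  have h9 : (ε*b*t) ^ (-q) = (ε*b) ^ (-q) * t ^ (-q) := by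
    rw [Real.mul_rpow (by positivity) (le_of_lt ht0)]
  have h10 : t ^ (-q) ≤ t ^ (-1+ε) := by
    have hkey : 1 - ε ≤ q := by rw [hq, le_div_iff₀ h2ε]; nlinarith
    apply Real.rpow_le_rpow_of_exponent_le ht; linarith
  calc θ ≤ 2*b * Real.exp (-(ε*ζ)) * Real.exp (-((2-ε)*ζ)) := h7
  _ ≤ 2*b * Real.exp (-ε*y) * ((ε*b) ^ (-q) * t ^ (-q)) := by
      rw [← h9]
      apply mul_le_mul (by nlinarith [Real.exp_pos (-(ε*ζ)), Real.exp_pos (-ε*y)]) h6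
        (le_of_lt (Real.exp_pos _)) (by positivity)
  _ ≤ 2*b * Real.exp (-ε*y) * ((ε*b) ^ (-q) * t ^ (-1+ε)) := by
      apply mul_le_mul_of_nonneg_left _ (by positivity)
      exact mul_le_mul_of_nonneg_left h10 (by positivity)
  _ = (2*b*(ε*b) ^ (-q)) * t ^ (-1+ε) * Real.exp (-ε*y) := by ring
lemma characteristics' {wR : ℝ → ℝ → ℝ}
    (hw : ContDiff ℝ (⊤:ℕ∞) (fun p : ℝ × ℝ => wR p.1 p.2))
    (hpde : ∀ t x : ℝ, 0 ≤ t →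
      deriv (fun s => wR s x) t + wR t x * deriv (fun y => wR t y) x = 0)
    (t₀ x₀ : ℝ) (ht₀ : 0 ≤ t₀) :
    wR t₀ x₀ = wR 0 (x₀ - t₀ * wR t₀ x₀) := by
  set W : ℝ × ℝ → ℝ := fun p => wR p.1 p.2 with hW
  have hWd : Differentiable ℝ W := hw.differentiable (by simp)
  set c : ℝ := wR t₀ x₀ with hc
  set ℓ : ℝ → ℝ := fun s => x₀ + c * (s - t₀) with hℓ
  set γ : ℝ → ℝ × ℝ := fun s => (s, ℓ s) with hγdef
  set A : ℝ → ℝ := fun s => fderiv ℝ W (γ s) (0, 1) with hA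
  -- partial derivatives
  have hpt : ∀ s x : ℝ, HasDerivAt (fun τ => wR τ x) (fderiv ℝ W (s, x) (1, 0)) s := by
    intro s x
    have h1 : HasDerivAt (fun τ : ℝ => ((τ, x) : ℝ × ℝ)) (1, 0) s :=
      (hasDerivAt_id s).prodMk (hasDerivAt_const s x)
    exact (hWd (s, x)).hasFDerivAt.comp_hasDerivAt s h1
  have hpx : ∀ s x : ℝ, HasDerivAt (fun y => wR s y) (fderiv ℝ W (s, x) (0, 1)) x := by
    intro s x
    have h1 : HasDerivAt (fun y : ℝ => ((s, y) : ℝ × ℝ)) (0, 1) x :=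
      (hasDerivAt_const x s).prodMk (hasDerivAt_id x)
    exact (hWd (s, x)).hasFDerivAt.comp_hasDerivAt x h1
  have hpde' : ∀ s x : ℝ, 0 ≤ s →
      fderiv ℝ W (s, x) (1, 0) = -(wR s x * fderiv ℝ W (s, x) (0, 1)) := by
    intro s x hs
    have := hpde s x hs
    rw [(hpt s x).deriv, (hpx s x).deriv] at this
    linarith
  -- the function along the line
  have hγ : ∀ s : ℝ, HasDerivAt γ (1, c) s := by
    intro s
    have h2 : HasDerivAt ℓ c s := by
      simpa [hℓ] using ((((hasDerivAt_id s).sub_const t₀).const_mul c).const_add x₀)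
    exact (hasDerivAt_id s).prodMk h2
  set g : ℝ → ℝ := fun s => W (γ s) - c with hg
  have hgd : ∀ s : ℝ, 0 ≤ s → HasDerivAt g (-(g s) * A s) s := by
    intro s hs
    have h1 : HasDerivAt (fun s => W (γ s)) (fderiv ℝ W (γ s) (1, c)) s :=
      (hWd (γ s)).hasFDerivAt.comp_hasDerivAt s (hγ s)
    have h2 : fderiv ℝ W (γ s) (1, c) = -(g s) * A s := by
      have hsum : ((1 : ℝ), (c : ℝ)) = (1, 0) + c • (0, 1) := by
        simp [Prod.ext_iff]
      rw [hsum, map_add, ContinuousLinearMap.map_smul]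
      have h3 := hpde' s (ℓ s) hs
      have : W (γ s) = wR s (ℓ s) := rfl
      rw [hA]
      simp only [hγdef]
      rw [h3]
      simp only [hg, hγdef, hW, smul_eq_mul]
      ring
    rw [← h2]
    exact h1.sub_const c
  -- time-reversed Gronwall
  set G : ℝ → ℝ := fun s => g (t₀ - s) with hG
  have hGd : ∀ s ∈ Set.Ico 0 t₀, HasDerivAt G (G s * A (t₀ - s)) s := by
    intro s hs
    have hts : 0 ≤ t₀ - s := by
      rcases hs with ⟨_, h2⟩; linarith
    have h1 : HasDerivAt (fun s : ℝ => t₀ - s) (-1) s := by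
      simpa using (hasDerivAt_id s).const_sub t₀
    have h2 := (hgd (t₀ - s) hts).comp s h1
    have : -(g (t₀ - s)) * A (t₀ - s) * (-1) = G s * A (t₀ - s) := by
      rw [hG]; ring
    rw [← this]
    exact h2
  obtain ⟨K, hK⟩ := (isCompact_Icc : IsCompact (Set.Icc (0:ℝ) t₀)).exists_bound_of_continuousOn
    (f := fun s => A (t₀ - s))
    (by
      have hfc : Continuous (fderiv ℝ W) := hw.continuous_fderiv (by simp)
      have hγc : Continuous γ := by
        apply continuous_id.prodMk
        continuity
      have hAc : Continuous A := (hfc.comp hγc).clm_apply continuous_const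
      exact (hAc.comp (continuous_const.sub continuous_id)).continuousOn)
  have hGcont : ContinuousOn G (Set.Icc 0 t₀) := by
    have : Continuous G := by
      have hγc : Continuous γ := by
        apply continuous_id.prodMk; continuity
      exact ((hw.continuous.comp (hγc.comp (continuous_const.sub continuous_id))).sub
        continuous_const)
    exact this.continuousOn
  have hG0 : ‖G 0‖ ≤ 0 := by
    have : G 0 = 0 := by
      simp only [hG, hg, hγdef, hℓ, hW, sub_zero]
      simp [hc]
    rw [this]; simp
  have hbound := norm_le_gronwallBound_of_norm_deriv_right_le (δ := 0) (K := K) (ε := 0)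
    (f := G) (f' := fun s => G s * A (t₀ - s)) (a := 0) (b := t₀)
    hGcont (fun s hs => ((hGd s hs).hasDerivWithinAt)) hG0
    (fun s hs => by
      rw [Real.norm_eq_abs, abs_mul]
      have h1 : |A (t₀ - s)| ≤ K := by
        have h2 := hK s (Set.mem_Icc.2 ⟨hs.1, le_of_lt hs.2⟩)
        simpa using h2
      have h3 : (0:ℝ) ≤ |G s| := abs_nonneg _
      calc |G s| * |A (t₀ - s)| ≤ |G s| * K := mul_le_mul_of_nonneg_left h1 h3
      _ = K * |G s| + 0 := by ring)
  have hfin := hbound t₀ (Set.mem_Icc.2 ⟨ht₀, le_refl t₀⟩)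
  rw [sub_zero, gronwallBound_ε0_δ0, Real.norm_eq_abs, abs_nonpos_iff] at hfin
  have : G t₀ = wR 0 (x₀ - t₀ * c) - c := by
    simp only [hG, hg, hγdef, hℓ, hW, sub_self]
    ring_nf
  rw [this, sub_eq_zero] at hfin
  exact hfin.symm
lemma sep_lemma' {f : ℝ → ℝ} (hf : ContDiff ℝ (⊤:ℕ∞) f) {a b m : ℝ} (hm0 : 0 < m)
    (hm : ∀ u ∈ Set.Icc a b, m ≤ deriv (deriv f) u) :
    ∀ p ∈ Set.Icc a b, ∀ q ∈ Set.Icc a b, m * |p - q| ≤ |deriv f p - deriv f q| := by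
  have hf' : ContDiff ℝ (⊤:ℕ∞) (deriv f) := by
    have := (contDiff_infty_iff_deriv.mp (by exact_mod_cast hf)).2
    exact_mod_cast this
  have key : ∀ p ∈ Set.Icc a b, ∀ q ∈ Set.Icc a b, p < q →
      m * (q - p) ≤ deriv f q - deriv f p := by
    intro p hp q hq hpq
    obtain ⟨c, hc, hceq⟩ := exists_hasDerivAt_eq_slope (deriv f) (deriv (deriv f)) hpq
      (hf'.continuous.continuousOn)
      (fun x _ => ((hf'.differentiable (by simp)) x).hasDerivAt)
    have hcmem : c ∈ Set.Icc a b :=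
      ⟨le_trans hp.1 (le_of_lt hc.1), le_trans (le_of_lt hc.2) hq.2⟩
    have h1 : m ≤ (deriv f q - deriv f p) / (q - p) := by
      rw [← hceq]; exact hm c hcmem
    rw [le_div_iff₀ (by linarith)] at h1
    linarith
  intro p hp q hq
  rcases lt_trichotomy p q with h | h | h
  · have := key p hp q hq h
    have h2 : 0 < m*(q-p) := mul_pos hm0 (by linarith)
    rw [abs_of_neg (by linarith : p - q < 0), abs_of_nonpos (by linarith)]
    linarith
  · simp [h]
  · have := key q hq p hp h
    have h2 : 0 < m*(p-q) := mul_pos hm0 (by linarith)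
    rw [abs_of_pos (by linarith : (0:ℝ) < p - q), abs_of_nonneg (by linarith)]
    linarith
/-- refined decay estimates (with any `ε ∈ (0,1)`) for the approximate
rarefaction wave towards the end states and towards the self-similar rarefaction fan. -/
theorem stmt_6 (f : ℝ → ℝ) (uminus uplus δR : ℝ)
    (hf : ContDiff ℝ (⊤ : ℕ∞) f) (hlt : uminus < uplus)
    (hconv : ∀ u ∈ Set.Icc uminus uplus, 0 < deriv (deriv f) u)
    (hδR : δR = uplus - uminus)
    (wR uR : ℝ → ℝ → ℝ) (ur : ℝ → ℝ)
    (hwsmooth : ContDiff ℝ (⊤ : ℕ∞) (fun p : ℝ × ℝ => wR p.1 p.2))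
    (hwpde : ∀ t x : ℝ, 0 ≤ t →
      deriv (fun s => wR s x) t + wR t x * deriv (fun y => wR t y) x = 0)
    (hw0 : ∀ x : ℝ, wR 0 x =
      (deriv f uplus + deriv f uminus) / 2
        + ((deriv f uplus - deriv f uminus) / 2) * Real.tanh x)
    (huR : ∀ t x : ℝ, 0 ≤ t →
      uR t x ∈ Set.Icc uminus uplus ∧ deriv f (uR t x) = wR t x)
    (hur1 : ∀ y ≤ deriv f uminus, ur y = uminus)
    (hur2 : ∀ y ∈ Set.Icc (deriv f uminus) (deriv f uplus),
      ur y ∈ Set.Icc uminus uplus ∧ deriv f (ur y) = y)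
    (hur3 : ∀ y, deriv f uplus ≤ y → ur y = uplus) :
    ∀ ε ∈ Set.Ioo (0:ℝ) 1, ∃ C > (0:ℝ), ∀ t : ℝ, 1 ≤ t →
      (∀ x : ℝ, deriv f uplus * t ≤ x →
        |uR t x - uplus| ≤
          C * δR ^ (2 * ε / (2 + ε)) * t ^ (-1 + ε) * Real.exp (-ε * |x - deriv f uplus * t|)) ∧
      (∀ x : ℝ, x ≤ deriv f uminus * t →
        |uR t x - uminus| ≤
          C * δR ^ (2 * ε / (2 + ε)) * t ^ (-1 + ε) * Real.exp (-ε * |x - deriv f uminus * t|)) ∧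
      (∀ x : ℝ, deriv f uminus * t ≤ x → x ≤ deriv f uplus * t →
        |uR t x - ur (x / t)| ≤ C * δR ^ ε * t ^ (-1 + ε)) := by
  intro ε hε
  obtain ⟨hε0, hε1⟩ := hε
  have hf1 : ContDiff ℝ (⊤:ℕ∞) (deriv f) := by
    exact_mod_cast (contDiff_infty_iff_deriv.mp (by exact_mod_cast hf)).2
  have hf2 : ContDiff ℝ (⊤:ℕ∞) (deriv (deriv f)) := by
    exact_mod_cast (contDiff_infty_iff_deriv.mp (by exact_mod_cast hf1)).2
  set lamp := deriv f uplus with hlamp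
  set lamm := deriv f uminus with hlamm
  have hupmem : uplus ∈ Set.Icc uminus uplus := ⟨le_of_lt hlt, le_refl _⟩
  have hummem : uminus ∈ Set.Icc uminus uplus := ⟨le_refl _, le_of_lt hlt⟩
  obtain ⟨z, hzmem, hzmin⟩ := (isCompact_Icc (a := uminus) (b := uplus)).exists_isMinOn
    (Set.nonempty_Icc.2 (le_of_lt hlt)) (hf2.continuous.continuousOn)
  set m := deriv (deriv f) z with hmdef
  have hm0 : 0 < m := hconv z hzmem
  have hm : ∀ u ∈ Set.Icc uminus uplus, m ≤ deriv (deriv f) u := fun u hu => hzmin hu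
  have hsep := sep_lemma' hf hm0 hm
  have hll : lamm < lamp := by
    have hmono := strictMonoOn_of_deriv_pos (convex_Icc uminus uplus)
      (hf1.continuous.continuousOn)
      (fun x hx => hconv x (interior_subset hx))
    exact hmono hummem hupmem hlt
  set b := (lamp - lamm)/2 with hbdef
  set av := (lamp + lamm)/2 with havdef
  have hb : 0 < b := by rw [hbdef]; linarith
  have hab : av + b = lamp := by rw [havdef, hbdef]; ring
  have hab2 : av - b = lamm := by rw [havdef, hbdef]; ring
  have hδ : 0 < δR := by rw [hδR]; linarith
  -- the key identity from the method of characteristics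
  have hkey : ∀ t x : ℝ, 0 ≤ t → wR t x = av + b * Real.tanh (x - t * wR t x) := by
    intro t x ht
    have h := characteristics' hwsmooth hwpde t x ht
    rw [hw0] at h
    exact h
  have hwb : ∀ t x : ℝ, 0 ≤ t → lamm < wR t x ∧ wR t x < lamp := by
    intro t x ht
    have h := hkey t x ht
    have ht1 := tanh_mem' (x - t * wR t x)
    constructor
    · nlinarith [ht1.1]
    · nlinarith [ht1.2]
  set q : ℝ := (2-ε)/(2+ε) with hqdef
  set p2 : ℝ := 2*ε/(2+ε) with hp2def
  set c0 : ℝ := 2*b*(ε*b)^(-q) with hc0def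
  set Kmid : ℝ := 1 + (2*b)^ε/(2*ε) with hKmiddef
  have hc0 : 0 < c0 := by rw [hc0def]; positivity
  have hKmid : 0 < Kmid := by rw [hKmiddef]; positivity
  set C : ℝ := max (c0/m * δR^(-p2)) (Kmid/m * δR^(-ε)) with hCdef
  have hC0 : 0 < C := lt_of_lt_of_le (by positivity) (le_max_left _ _)
  refine ⟨C, hC0, ?_⟩
  intro t ht
  have ht0 : (0:ℝ) < t := lt_of_lt_of_le one_pos ht
  have htnn : (0:ℝ) ≤ t := le_of_lt ht0
  have hCp2 : c0/m ≤ C * δR^p2 := by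
    have h1 : c0/m * δR^(-p2) ≤ C := le_max_left _ _
    have h2 := mul_le_mul_of_nonneg_right h1 (le_of_lt (Real.rpow_pos_of_pos hδ p2))
    rwa [mul_assoc, ← Real.rpow_add hδ, neg_add_cancel, Real.rpow_zero, mul_one] at h2
  have hCε : Kmid/m ≤ C * δR^ε := by
    have h1 : Kmid/m * δR^(-ε) ≤ C := le_max_right _ _
    have h2 := mul_le_mul_of_nonneg_right h1 (le_of_lt (Real.rpow_pos_of_pos hδ ε))
    rwa [mul_assoc, ← Real.rpow_add hδ, neg_add_cancel, Real.rpow_zero, mul_one] at h2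
  refine ⟨?_, ?_, ?_⟩
  · -- right of the fan
    intro x hx
    have hu := huR t x htnn
    have hwb' := hwb t x htnn
    set w := wR t x with hwdef
    set ξ := x - t*w with hξdef
    set θ := lamp - w with hθdef
    have hθeq : θ = 2*b/(Real.exp (2*ξ)+1) := by
      have h := hkey t x htnn
      have h' : w = av + b * Real.tanh ξ := h
      have h2 : θ = b * (1 - Real.tanh ξ) := by linear_combination -hab - h' + hθdef
      rw [h2, one_sub_tanh' ξ]; ring
    have hy : 0 ≤ x - lamp*t := by linarith
    have hζeq : ξ = (x - lamp*t) + t*θ := by rw [hξdef, hθdef]; ring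
    have hcore := core_decay' hε0 hε1 hb ht hy hθeq hζeq
    have habs : |w - lamp| = θ := by
      rw [hθdef, abs_of_nonpos (by linarith [hwb'.2])]; ring
    have hsep' := hsep (uR t x) hu.1 uplus hupmem
    rw [hu.2, ← hlamp, habs] at hsep'
    have h1 : |uR t x - uplus| ≤ θ/m := by
      rw [le_div_iff₀ hm0]
      calc |uR t x - uplus| * m = m * |uR t x - uplus| := by ring
      _ ≤ θ := hsep'
    rw [abs_of_nonneg hy]
    calc |uR t x - uplus| ≤ θ/m := h1
    _ ≤ (c0 * t^(-1+ε) * Real.exp (-ε*(x - lamp*t)))/m :=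
        div_le_div_of_nonneg_right hcore hm0.le
    _ = (c0/m) * (t^(-1+ε) * Real.exp (-ε*(x - lamp*t))) := by ring
    _ ≤ (C * δR^p2) * (t^(-1+ε) * Real.exp (-ε*(x - lamp*t))) := by
        apply mul_le_mul_of_nonneg_right hCp2 (by positivity)
    _ = C * δR^p2 * t^(-1+ε) * Real.exp (-ε*(x - lamp*t)) := by ring
  · -- left of the fan
    intro x hx
    have hu := huR t x htnn
    have hwb' := hwb t x htnn
    set w := wR t x with hwdef
    set ξ := x - t*w with hξdef
    set θ := w - lamm with hθdef
    have hθeq : θ = 2*b/(Real.exp (2*(-ξ))+1) := by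
      have h := hkey t x htnn
      have h' : w = av + b * Real.tanh ξ := h
      have h2 : θ = b * (1 + Real.tanh ξ) := by linear_combination h' + hab2 + hθdef
      rw [h2, one_add_tanh' ξ]; ring
    have hy : 0 ≤ lamm*t - x := by linarith
    have hζeq : -ξ = (lamm*t - x) + t*θ := by rw [hξdef, hθdef]; ring
    have hcore := core_decay' hε0 hε1 hb ht hy hθeq hζeq
    have habs : |w - lamm| = θ := by
      rw [hθdef, abs_of_nonneg (by linarith [hwb'.1])]
    have hsep' := hsep (uR t x) hu.1 uminus hummem
    rw [hu.2, ← hlamm, habs] at hsep'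
    have h1 : |uR t x - uminus| ≤ θ/m := by
      rw [le_div_iff₀ hm0]
      calc |uR t x - uminus| * m = m * |uR t x - uminus| := by ring
      _ ≤ θ := hsep'
    have habs2 : |x - lamm*t| = lamm*t - x := by
      rw [abs_of_nonpos (by linarith), neg_sub]
    rw [habs2]
    calc |uR t x - uminus| ≤ θ/m := h1
    _ ≤ (c0 * t^(-1+ε) * Real.exp (-ε*(lamm*t - x)))/m := by
        exact div_le_div_of_nonneg_right hcore hm0.le
    _ = (c0/m) * (t^(-1+ε) * Real.exp (-ε*(lamm*t - x))) := by ring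
    _ ≤ (C * δR^p2) * (t^(-1+ε) * Real.exp (-ε*(lamm*t - x))) := by
        apply mul_le_mul_of_nonneg_right hCp2 (by positivity)
    _ = C * δR^p2 * t^(-1+ε) * Real.exp (-ε*(lamm*t - x)) := by ring
  · -- inside the fan
    intro x hx1 hx2
    have hu := huR t x htnn
    have hwb' := hwb t x htnn
    set w := wR t x with hwdef
    set ξ := x - t*w with hξdef
    -- |ξ| (e^{2|ξ|}+1) ≤ 2 b t
    have hmid : |ξ| * (Real.exp (2*|ξ|) + 1) ≤ 2*b*t := by
      rcases le_or_gt 0 ξ with hξ0 | hξ0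
      · set θ := lamp - w with hθdef
        have hθeq : θ = 2*b/(Real.exp (2*ξ)+1) := by
          have h := hkey t x htnn
          have h' : w = av + b * Real.tanh ξ := h
          have h2 : θ = b * (1 - Real.tanh ξ) := by linear_combination -hab - h' + hθdef
          rw [h2, one_sub_tanh' ξ]; ring
        have hEpos : (0:ℝ) < Real.exp (2*ξ) + 1 := by positivity
        have hmul : θ * (Real.exp (2*ξ)+1) = 2*b := by
          rw [hθeq]; exact div_mul_cancel₀ _ (ne_of_gt hEpos)
        have hle : ξ ≤ t*θ := by
          have e : t*θ = lamp*t - t*w := by rw [hθdef]; ring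
          rw [e, hξdef]; linarith
        rw [abs_of_nonneg hξ0]
        calc ξ * (Real.exp (2*ξ) + 1) ≤ t*θ*(Real.exp (2*ξ)+1) :=
          mul_le_mul_of_nonneg_right hle (le_of_lt hEpos)
        _ = 2*b*t := by rw [mul_assoc, hmul]; ring
      · set θ := w - lamm with hθdef
        have hθeq : θ = 2*b/(Real.exp (2*(-ξ))+1) := by
          have h := hkey t x htnn
          have h' : w = av + b * Real.tanh ξ := h
          have h2 : θ = b * (1 + Real.tanh ξ) := by linear_combination h' + hab2 + hθdef
          rw [h2, one_add_tanh' ξ]; ring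
        have hEpos : (0:ℝ) < Real.exp (2*(-ξ)) + 1 := by positivity
        have hmul : θ * (Real.exp (2*(-ξ))+1) = 2*b := by
          rw [hθeq]; exact div_mul_cancel₀ _ (ne_of_gt hEpos)
        have hle : -ξ ≤ t*θ := by
          have e : t*θ = t*w - lamm*t := by rw [hθdef]; ring
          rw [e, hξdef]; linarith
        rw [abs_of_neg hξ0]
        calc (-ξ) * (Real.exp (2*(-ξ)) + 1) ≤ t*θ*(Real.exp (2*(-ξ))+1) :=
          mul_le_mul_of_nonneg_right hle (le_of_lt hEpos)
        _ = 2*b*t := by rw [mul_assoc, hmul]; ring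
    have hξbd : |ξ| ≤ Kmid * t^ε := mid_bound' hε0 hb ht hmid
    -- pass to uR and ur
    have hxt : x/t ∈ Set.Icc lamm lamp := by
      constructor
      · rw [le_div_iff₀ ht0]; exact hx1
      · rw [div_le_iff₀ ht0]; exact hx2
    have hur' := hur2 (x/t) hxt
    have hsep' := hsep (uR t x) hu.1 (ur (x/t)) hur'.1
    rw [hu.2, hur'.2] at hsep'
    have hwx : |w - x/t| = |ξ|/t := by
      have : w - x/t = -(ξ/t) := by rw [hξdef]; field_simp; ring
      rw [this, abs_neg, abs_div, abs_of_pos ht0]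
    rw [hwx] at hsep'
    have h1 : |uR t x - ur (x/t)| ≤ (|ξ|/t)/m := by
      rw [le_div_iff₀ hm0]
      calc |uR t x - ur (x/t)| * m = m * |uR t x - ur (x/t)| := by ring
      _ ≤ |ξ|/t := hsep'
    have htpow : t^(-1+ε) = t^ε/t := by
      rw [Real.rpow_add ht0, Real.rpow_neg_one]
      ring
    calc |uR t x - ur (x/t)| ≤ (|ξ|/t)/m := h1
    _ ≤ ((Kmid * t^ε)/t)/m := by
        exact div_le_div_of_nonneg_right
          (div_le_div_of_nonneg_right hξbd ht0.le) hm0.le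
    _ = (Kmid/m) * (t^ε/t) := by ring
    _ ≤ (C * δR^ε) * (t^ε/t) := by
        apply mul_le_mul_of_nonneg_right hCε
        positivity
    _ = C * δR^ε * t^(-1+ε) := by rw [htpow]
end
end

section
/- The approximate rarefaction wave converges uniformly to the self-similar rarefaction fan: lim_{t → ∞} sup_{x ∈ ℝ} |u^R(t,x) - u^r(x/t)| = 0. -/
open Filter MeasureTheory

noncomputable section

lemma hasDerivAt_partial_t (wR : ℝ → ℝ → ℝ)
    (hws : ContDiff ℝ (⊤ : ℕ∞) (fun p : ℝ × ℝ => wR p.1 p.2)) (t x : ℝ) :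
    HasDerivAt (fun s => wR s x)
      (fderiv ℝ (fun p : ℝ × ℝ => wR p.1 p.2) (t, x) (1, 0)) t := by
  have hd := (hws.differentiable (by simp) (t, x)).hasFDerivAt
  have hγ : HasDerivAt (fun s : ℝ => (s, x)) ((1:ℝ), (0:ℝ)) t :=
    (hasDerivAt_id t).prodMk (hasDerivAt_const t x)
  exact hd.comp_hasDerivAt t hγ

lemma hasDerivAt_partial_x (wR : ℝ → ℝ → ℝ)
    (hws : ContDiff ℝ (⊤ : ℕ∞) (fun p : ℝ × ℝ => wR p.1 p.2)) (t x : ℝ) :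
    HasDerivAt (fun y => wR t y)
      (fderiv ℝ (fun p : ℝ × ℝ => wR p.1 p.2) (t, x) (0, 1)) x := by
  have hd := (hws.differentiable (by simp) (t, x)).hasFDerivAt
  have hγ : HasDerivAt (fun y : ℝ => ((t : ℝ), y)) ((0:ℝ), (1:ℝ)) x :=
    (hasDerivAt_const x t).prodMk (hasDerivAt_id x)
  exact hd.comp_hasDerivAt x hγ

lemma char_eq (wR : ℝ → ℝ → ℝ)
    (hws : ContDiff ℝ (⊤ : ℕ∞) (fun p : ℝ × ℝ => wR p.1 p.2))
    (hpde : ∀ t x : ℝ, 0 ≤ t →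
      deriv (fun s => wR s x) t + wR t x * deriv (fun y => wR t y) x = 0)
    (x0 t : ℝ) (ht : 0 ≤ t) :
    wR t (x0 + t * wR 0 x0) = wR 0 x0 := by
  set W : ℝ × ℝ → ℝ := fun p => wR p.1 p.2 with hW
  set c : ℝ := wR 0 x0 with hc
  set γ : ℝ → ℝ := fun s => x0 + s * c with hγdef
  set g : ℝ → ℝ := fun s => wR s (γ s) - c with hgdef
  have hgd : ∀ s : ℝ, 0 ≤ s →
      HasDerivAt g (-(g s) * fderiv ℝ W (s, γ s) (0, 1)) s := by
    intro s hs
    have hline : HasDerivAt γ c s := by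
      exact (((hasDerivAt_id' s).mul_const c).const_add x0).congr_deriv (one_mul c)
    have hΓ : HasDerivAt (fun r : ℝ => (r, γ r)) ((1:ℝ), c) s :=
      (hasDerivAt_id s).prodMk hline
    have hd := (hws.differentiable (by simp) (s, γ s)).hasFDerivAt
    have hcomp : HasDerivAt (fun r => wR r (γ r)) (fderiv ℝ W (s, γ s) (1, c)) s :=
      by have := hd.comp_hasDerivAt s hΓ; exact this
    have hsplit : fderiv ℝ W (s, γ s) (1, c)
        = fderiv ℝ W (s, γ s) (1, 0) + c * fderiv ℝ W (s, γ s) (0, 1) := by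
      have : ((1:ℝ), c) = ((1:ℝ), (0:ℝ)) + c • ((0:ℝ), (1:ℝ)) := by
        simp [Prod.ext_iff]
      rw [this, map_add, ContinuousLinearMap.map_smul]
      simp [smul_eq_mul]
    have hpt : deriv (fun r => wR r (γ s)) s = fderiv ℝ W (s, γ s) (1, 0) :=
      (hasDerivAt_partial_t wR hws s (γ s)).deriv
    have hpx : deriv (fun y => wR s y) (γ s) = fderiv ℝ W (s, γ s) (0, 1) :=
      (hasDerivAt_partial_x wR hws s (γ s)).deriv
    have hpde' := hpde s (γ s) hs
    rw [hpt, hpx] at hpde'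
    have : fderiv ℝ W (s, γ s) (1, c)
        = -(g s) * fderiv ℝ W (s, γ s) (0, 1) := by
      rw [hsplit]
      have h1 : fderiv ℝ W (s, γ s) (1, 0) = - (wR s (γ s) * fderiv ℝ W (s, γ s) (0, 1)) := by
        linarith
      rw [h1, hgdef]
      ring
    rw [this] at hcomp
    have : HasDerivAt g (-(g s) * fderiv ℝ W (s, γ s) (0, 1)) s := by
      simpa [hgdef] using hcomp.sub_const c
    exact this
  have hcontP : ContinuousOn (fun s => fderiv ℝ W (s, γ s) (0, 1)) (Set.Icc 0 t) := by
    have h1 : Continuous fun s : ℝ => fderiv ℝ W (s, γ s) :=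
      (hws.continuous_fderiv (by simp)).comp
        (continuous_id.prodMk (by continuity))
    exact (h1.clm_apply continuous_const).continuousOn
  obtain ⟨K, hK⟩ := (isCompact_Icc).exists_bound_of_continuousOn hcontP
  have hgcont : ContinuousOn g (Set.Icc 0 t) := by
    have : Continuous g := by
      have : Continuous fun s => wR s (γ s) :=
        hws.continuous.comp (continuous_id.prodMk (by continuity))
      exact this.sub continuous_const
    exact this.continuousOn
  have hg0 : ‖g 0‖ ≤ 0 := by simp [hgdef, hγdef, hc]
  have hbound : ∀ s ∈ Set.Ico 0 t, ‖-(g s) * fderiv ℝ W (s, γ s) (0, 1)‖ ≤ K * ‖g s‖ + 0 := by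
    intro s hs
    have h1 : ‖-(g s) * fderiv ℝ W (s, γ s) (0, 1)‖
        = ‖fderiv ℝ W (s, γ s) (0, 1)‖ * ‖g s‖ := by
      rw [norm_mul, norm_neg]; ring
    rw [h1, add_zero]
    exact mul_le_mul_of_nonneg_right (hK s (Set.Ico_subset_Icc_self hs)) (norm_nonneg _)
  have := norm_le_gronwallBound_of_norm_deriv_right_le hgcont
    (fun s hs => ((hgd s hs.1).hasDerivWithinAt)) hg0 hbound t
    (by constructor <;> [exact ht; rfl])
  rw [gronwallBound_ε0] at this
  have hgt : g t = 0 := by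
    have h0 : ‖g t‖ ≤ 0 := by simpa using this
    simpa using le_antisymm h0 (norm_nonneg _)
  have := sub_eq_zero.mp (by simpa [hgdef] using hgt)
  simpa [hγdef] using this

lemma tanh_facts (x : ℝ) :
    0 < 1 - Real.tanh x ∧ 1 - Real.tanh x ≤ 2 * Real.exp (-(2*x)) ∧
    0 < 1 + Real.tanh x ∧ 1 + Real.tanh x ≤ 2 * Real.exp (2*x) := by
  have hA := Real.exp_pos x
  have hB := Real.exp_pos (-x)
  have hden : (0:ℝ) < Real.exp x + Real.exp (-x) := by positivity
  have htanh : Real.tanh x = (Real.exp x - Real.exp (-x)) / (Real.exp x + Real.exp (-x)) := by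
    rw [Real.tanh_eq_sinh_div_cosh, Real.sinh_eq, Real.cosh_eq]
    first
    | (field_simp; ring)
    | field_simp
  have hAB : Real.exp x * Real.exp (-x) = 1 := by
    rw [← Real.exp_add]; simp
  have hBB : Real.exp (-(2*x)) = Real.exp (-x) * Real.exp (-x) := by
    rw [← Real.exp_add]; ring_nf
  have hAA : Real.exp (2*x) = Real.exp x * Real.exp x := by
    rw [← Real.exp_add]; ring_nf
  have key1 : 1 - Real.tanh x = 2 * Real.exp (-x) / (Real.exp x + Real.exp (-x)) := by
    rw [htanh]; field_simp; ring
  have key2 : 1 + Real.tanh x = 2 * Real.exp x / (Real.exp x + Real.exp (-x)) := by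
    rw [htanh]; field_simp; ring
  refine ⟨by rw [key1]; positivity, ?_, by rw [key2]; positivity, ?_⟩
  · rw [key1, div_le_iff₀ hden, hBB]
    nlinarith [hB, hA, hAB]
  · rw [key2, div_le_iff₀ hden, hAA]
    nlinarith [hB, hA, hAB]

set_option maxHeartbeats 1000000 in
/-- the approximate rarefaction wave converges uniformly in `x`, as
`t → ∞`, to the self-similar rarefaction fan. -/
theorem stmt_7 (f : ℝ → ℝ) (uminus uplus δR : ℝ)
    (hf : ContDiff ℝ (⊤ : ℕ∞) f) (hlt : uminus < uplus)
    (hconv : ∀ u ∈ Set.Icc uminus uplus, 0 < deriv (deriv f) u)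
    (hδR : δR = uplus - uminus)
    (wR uR : ℝ → ℝ → ℝ) (ur : ℝ → ℝ)
    (hwsmooth : ContDiff ℝ (⊤ : ℕ∞) (fun p : ℝ × ℝ => wR p.1 p.2))
    (hwpde : ∀ t x : ℝ, 0 ≤ t →
      deriv (fun s => wR s x) t + wR t x * deriv (fun y => wR t y) x = 0)
    (hw0 : ∀ x : ℝ, wR 0 x =
      (deriv f uplus + deriv f uminus) / 2
        + ((deriv f uplus - deriv f uminus) / 2) * Real.tanh x)
    (huR : ∀ t x : ℝ, 0 ≤ t →
      uR t x ∈ Set.Icc uminus uplus ∧ deriv f (uR t x) = wR t x)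
    (hur1 : ∀ y ≤ deriv f uminus, ur y = uminus)
    (hur2 : ∀ y ∈ Set.Icc (deriv f uminus) (deriv f uplus),
      ur y ∈ Set.Icc uminus uplus ∧ deriv f (ur y) = y)
    (hur3 : ∀ y, deriv f uplus ≤ y → ur y = uplus) :
    ∀ ε > (0:ℝ), ∃ T > (0:ℝ), ∀ t ≥ T, ∀ x : ℝ,
      |uR t x - ur (x / t)| < ε := by
  intro ε hε
  set lm := deriv f uminus with hlmdef
  set lp := deriv f uplus with hlpdef
  -- smoothness of deriv f and deriv (deriv f)
  have hdf : ContDiff ℝ (⊤ : ℕ∞) (deriv f) := (contDiff_infty_iff_deriv.mp hf).2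
  have hdfdiff : Differentiable ℝ (deriv f) := (contDiff_infty_iff_deriv.mp hdf).1
  have hdf2cont : Continuous (deriv (deriv f)) :=
    ((contDiff_infty_iff_deriv.mp hdf).2).continuous
  -- strict monotonicity of deriv f on the interval
  have hmonoS : StrictMonoOn (deriv f) (Set.Icc uminus uplus) :=
    strictMonoOn_of_deriv_pos (convex_Icc _ _) hdf.continuous.continuousOn
      (fun u hu => hconv u (interior_subset hu))
  have hlplm : lm < lp := hmonoS ⟨le_refl _, hlt.le⟩ ⟨hlt.le, le_refl _⟩ hlt
  -- minimum of the second derivative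
  obtain ⟨u0, hu0, hminOn⟩ := isCompact_Icc.exists_isMinOn (Set.nonempty_Icc.mpr hlt.le)
    (hdf2cont.continuousOn (s := Set.Icc uminus uplus))
  set m := deriv (deriv f) u0 with hmdef
  have hm0 : 0 < m := hconv u0 hu0
  -- reverse Lipschitz property of deriv f
  have hh : ∀ u : ℝ, HasDerivAt (fun v => deriv f v - m * v) (deriv (deriv f) u - m) u := by
    intro u
    have h1 : HasDerivAt (deriv f) (deriv (deriv f) u) u := (hdfdiff u).hasDerivAt
    have h2 : HasDerivAt (fun v : ℝ => m * v) m u := by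
      simpa using (hasDerivAt_id u).const_mul m
    exact h1.sub h2
  have hmono2 : MonotoneOn (fun v => deriv f v - m * v) (Set.Icc uminus uplus) := by
    apply monotoneOn_of_deriv_nonneg (convex_Icc _ _)
    · exact (hdf.continuous.sub (continuous_const.mul continuous_id)).continuousOn
    · intro u hu
      exact ((hh u).differentiableAt).differentiableWithinAt
    · intro u hu
      rw [(hh u).deriv]
      have := isMinOn_iff.mp hminOn u (interior_subset hu)
      linarith
  have hrev : ∀ u ∈ Set.Icc uminus uplus, ∀ v ∈ Set.Icc uminus uplus,
      m * |u - v| ≤ |deriv f u - deriv f v| := by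
    intro u hu v hv
    rcases le_total u v with huv | huv
    · have h1 := hmono2 hu hv huv
      have h2 : deriv f u ≤ deriv f v := hmonoS.monotoneOn hu hv huv
      rw [abs_of_nonpos (by linarith), abs_of_nonpos (by linarith)]
      simp only at h1
      linarith
    · have h1 := hmono2 hv hu huv
      have h2 : deriv f v ≤ deriv f u := hmonoS.monotoneOn hv hu huv
      rw [abs_of_nonneg (by linarith), abs_of_nonneg (by linarith)]
      simp only at h1
      linarith
  -- the clamp function
  set cl : ℝ → ℝ := fun y => max lm (min lp y) with hcldef
  have hurcl : ∀ y : ℝ, ur y ∈ Set.Icc uminus uplus ∧ deriv f (ur y) = cl y := by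
    intro y
    rcases le_total y lm with h | h
    · refine ⟨by rw [hur1 y h]; exact ⟨le_refl _, hlt.le⟩, ?_⟩
      rw [hur1 y h, hcldef]
      have : min lp y ≤ lm := le_trans (min_le_right _ _) h
      simp [max_eq_left this]; rfl
    · rcases le_total y lp with h2 | h2
      · refine ⟨(hur2 y ⟨h, h2⟩).1, ?_⟩
        rw [(hur2 y ⟨h, h2⟩).2, hcldef]
        simp [min_eq_right h2, max_eq_right h]
      · refine ⟨by rw [hur3 y h2]; exact ⟨hlt.le, le_refl _⟩, ?_⟩
        rw [hur3 y h2, hcldef]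
        simp [min_eq_left h2, max_eq_right hlplm.le]; rfl
  have hclcontr : ∀ y z : ℝ, z ∈ Set.Icc lm lp → |cl y - z| ≤ |y - z| := by
    intro y z hz
    have hclz : cl z = z := by
      rw [hcldef]
      simp [min_eq_right hz.2, max_eq_right hz.1]
    calc |cl y - z| = |max lm (min lp y) - max lm (min lp z)| := by
          rw [show max lm (min lp z) = z from hclz]
      _ ≤ max |lm - lm| |min lp y - min lp z| := abs_max_sub_max_le_max _ _ _ _
      _ = |min lp y - min lp z| := by simp
      _ ≤ max |lp - lp| |y - z| := abs_min_sub_min_le_max _ _ _ _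
      _ = |y - z| := by simp
  -- constants
  set a := (lp + lm) / 2 with hadef
  set b := (lp - lm) / 2 with hbdef
  have hb0 : 0 < b := by rw [hbdef]; linarith
  set ε1 := m * ε / 2 with hε1def
  have hε1pos : 0 < ε1 := by rw [hε1def]; positivity
  -- choose M
  have htend : Tendsto (fun M : ℝ => 2 * b * Real.exp (-(2*M))) atTop (nhds 0) := by
    have h1 : Tendsto (fun M : ℝ => -(2*M)) atTop atBot := by
      apply tendsto_neg_atBot_iff.mpr
      exact (tendsto_id.const_mul_atTop (by norm_num : (0:ℝ) < 2))
    have h2 := Real.tendsto_exp_atBot.comp h1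
    have := h2.const_mul (2*b)
    simpa using this
  have hMex : ∃ M : ℝ, 2 * b * Real.exp (-(2*M)) < ε1 ∧ 0 < M := by
    have := (htend.eventually (gt_mem_nhds hε1pos)).and (eventually_gt_atTop 0)
    exact this.exists
  obtain ⟨M, hMe, hM0⟩ := hMex
  -- choose T
  refine ⟨M / ε1 + 1, by positivity, ?_⟩
  intro t ht x
  have htpos : 0 < t := lt_of_lt_of_le (by positivity) ht
  -- bound on the initial data
  have hw0bd : ∀ z : ℝ, |wR 0 z| ≤ |a| + |b| := by
    intro z
    rw [hw0 z]
    have h1 := (tanh_facts z).1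
    have h2 := (tanh_facts z).2.2.1
    have : |Real.tanh z| ≤ 1 := abs_le.mpr ⟨by linarith, by linarith⟩
    calc |a + b * Real.tanh z| ≤ |a| + |b * Real.tanh z| := abs_add_le _ _
      _ = |a| + |b| * |Real.tanh z| := by rw [abs_mul]
      _ ≤ |a| + |b| * 1 := by
          exact add_le_add_right (mul_le_mul_of_nonneg_left this (abs_nonneg _)) _
      _ = |a| + |b| := by ring
  -- find the characteristic foot point x0
  have hsurj : ∃ x0 : ℝ, x0 + t * wR 0 x0 = x := by
    set C := |a| + |b| with hCdef
    have hC0 : 0 ≤ C := by positivity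
    set φ : ℝ → ℝ := fun z => z + t * wR 0 z with hφdef
    have hφcont : ContinuousOn φ (Set.Icc (x - t*C) (x + t*C)) := by
      have : Continuous fun z : ℝ => wR 0 z :=
        hwsmooth.continuous.comp (continuous_const.prodMk continuous_id)
      exact (continuous_id.add (continuous_const.mul this)).continuousOn
    have hab : x - t*C ≤ x + t*C := by nlinarith
    have h1 : φ (x - t*C) ≤ x := by
      have h := mul_le_mul_of_nonneg_left (abs_le.mp (hw0bd (x - t*C))).2 htpos.le
      show x - t*C + t * wR 0 (x - t*C) ≤ x
      linarith
    have h2 : x ≤ φ (x + t*C) := by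
      have h := mul_le_mul_of_nonneg_left (abs_le.mp (hw0bd (x + t*C))).1 htpos.le
      rw [mul_neg] at h
      show x ≤ x + t*C + t * wR 0 (x + t*C)
      linarith
    have := intermediate_value_Icc hab hφcont ⟨h1, h2⟩
    obtain ⟨x0, _, hx0⟩ := this
    exact ⟨x0, hx0⟩
  obtain ⟨x0, hx0eq⟩ := hsurj
  set c0 := wR 0 x0 with hc0def
  have hchar : wR t x = c0 := by
    rw [← hx0eq]
    exact char_eq wR hwsmooth hwpde x0 t htpos.le
  have hc0val : c0 = a + b * Real.tanh x0 := by
    rw [hc0def, hw0 x0]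
  have htanh := tanh_facts x0
  have hlpa : lp = a + b := by rw [hadef, hbdef]; ring
  have hlma : lm = a - b := by rw [hadef, hbdef]; ring
  have hc0mem : c0 ∈ Set.Icc lm lp := by
    constructor
    · rw [hc0val, hlma]; nlinarith [htanh.2.2.1]
    · rw [hc0val, hlpa]; nlinarith [htanh.1]
  have hxt : x / t = c0 + x0 / t := by
    rw [← hx0eq, add_div, mul_div_cancel_left₀ _ htpos.ne', add_comm]
  -- key estimate
  have hkey : |c0 - cl (x / t)| < m * ε := by
    have hε1lt : ε1 < m * ε := by rw [hε1def]; nlinarith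
    rcases le_or_gt (|x0|) M with hcase | hcase
    · -- middle region
      have h1 : |cl (x/t) - c0| ≤ |x/t - c0| := hclcontr (x/t) c0 hc0mem
      have h2 : |x/t - c0| = |x0| / t := by
        rw [hxt]
        simp [abs_div, abs_of_pos htpos]
      have h3 : |x0| / t < ε1 := by
        rw [div_lt_iff₀ htpos]
        have hT : M / ε1 + 1 ≤ t := ht
        have : M < ε1 * t := by
          have h4 : ε1 * (M / ε1 + 1) = M + ε1 := by field_simp
          nlinarith [mul_le_mul_of_nonneg_left hT hε1pos.le]
        linarith
      have : |c0 - cl (x/t)| = |cl (x/t) - c0| := abs_sub_comm _ _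
      rw [this]
      calc |cl (x/t) - c0| ≤ |x/t - c0| := h1
        _ = |x0| / t := h2
        _ < ε1 := h3
        _ < m * ε := hε1lt
    · rcases le_or_gt x0 0 with hx0sign | hx0sign
      · -- far left : x0 < -M
        have hx0M : x0 < -M := by
          rcases abs_cases x0 with ⟨h, _⟩ | ⟨h, _⟩ <;> linarith
        have hxtle : x/t ≤ c0 := by
          rw [hxt]
          have : x0 / t ≤ 0 := div_nonpos_iff.mpr (Or.inr ⟨by linarith, htpos.le⟩)
          linarith
        have hclub : cl (x/t) ≤ c0 := by
          rw [hcldef]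
          apply max_le
          · exact hc0mem.1
          · exact le_trans (min_le_right _ _) hxtle
        have hcllb : lm ≤ cl (x/t) := le_max_left _ _
        have hgap : c0 - lm ≤ 2 * b * Real.exp (-(2*M)) := by
          have h5 : c0 - lm = b * (1 + Real.tanh x0) := by
            rw [hc0val, hlma]; ring
          have h6 : 1 + Real.tanh x0 ≤ 2 * Real.exp (2*x0) := htanh.2.2.2
          have h7 : Real.exp (2*x0) ≤ Real.exp (-(2*M)) :=
            Real.exp_le_exp.mpr (by linarith)
          rw [h5]
          nlinarith
        rw [abs_of_nonneg (by linarith)]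
        calc c0 - cl (x/t) ≤ c0 - lm := by linarith
          _ ≤ 2 * b * Real.exp (-(2*M)) := hgap
          _ < ε1 := hMe
          _ < m * ε := hε1lt
      · -- far right : x0 > M
        have hx0M : M < x0 := by
          rcases abs_cases x0 with ⟨h, _⟩ | ⟨h, _⟩ <;> linarith
        have hxtge : c0 ≤ x/t := by
          rw [hxt]
          have : 0 ≤ x0 / t := div_nonneg (by linarith) htpos.le
          linarith
        have hcllb : c0 ≤ cl (x/t) := by
          rw [hcldef]
          exact le_trans (le_min hc0mem.2 hxtge) (le_max_right _ _)
        have hclub : cl (x/t) ≤ lp := max_le hlplm.le (min_le_left _ _)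
        have hgap : lp - c0 ≤ 2 * b * Real.exp (-(2*M)) := by
          have h5 : lp - c0 = b * (1 - Real.tanh x0) := by
            rw [hc0val, hlpa]; ring
          have h6 : 1 - Real.tanh x0 ≤ 2 * Real.exp (-(2*x0)) := htanh.2.1
          have h7 : Real.exp (-(2*x0)) ≤ Real.exp (-(2*M)) :=
            Real.exp_le_exp.mpr (by linarith)
          rw [h5]
          nlinarith
        rw [abs_of_nonpos (by linarith)]
        calc -(c0 - cl (x/t)) = cl (x/t) - c0 := by ring
          _ ≤ lp - c0 := by linarith
          _ ≤ 2 * b * Real.exp (-(2*M)) := hgap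
          _ < ε1 := hMe
          _ < m * ε := hε1lt
  -- conclusion
  obtain ⟨huRmem, huReq⟩ := huR t x htpos.le
  obtain ⟨hurmem, hureq⟩ := hurcl (x / t)
  have hfinal := hrev (uR t x) huRmem (ur (x/t)) hurmem
  rw [huReq, hchar, hureq] at hfinal
  have : m * |uR t x - ur (x/t)| < m * ε := lt_of_le_of_lt hfinal hkey
  exact lt_of_mul_lt_mul_left this hm0.le
end
end
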